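/- arXiv:0705.1646 — 4 statements merged into one kernel-verified Lean document; each statement's English description precedes it below -/
import Mathlib

section
/- Let V be a finite-dimensional real inner product space with dim V = ℓ ≥ 1, and let Φ ⊆ V be a reduced crystallographic root system spanning V which is irreducible. Fix a base Δ of Φ with associated set Φ⁺ of positive roots. Then for every proper subset Σ ⊊ Δ, the number of positive roots α ∈ Φ⁺ that do not lie in the linear span of Σ is at least ℓ. -/
/-!
Let `N` be the span of `S` and `W` the span of the roots outside `N`. Every reflection `s_γ`,
`γ ∈ Φ`, preserves `W`: if `γ ∉ N` then `γ ∈ W`, and if `γ ∈ N` then `s_γ` permutes the roots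
outside `N`. A reflection-stable subspace contains each root or is orthogonal to it, so
irreducibility forces `W` to contain all of `Φ`, since it contains a simple root outside `S`.
Hence `W = V`. As every root outside `N` is `±` a positive root outside `N`, these positive roots
span `V`, so there are at least `ℓ` of them.
-/

open scoped RealInnerProductSpace

attribute [local instance] Classical.propDecidable

open Submodule

section RootReflection

variable {V : Type*} [NormedAddCommGroup V] [InnerProductSpace ℝ V]

lemma neg_mem_of_reflection_closed {Φ : Set V}
    (hrefl : ∀ α ∈ Φ, ∀ β ∈ Φ, β - (2 * ⟪β, α⟫ / ⟪α, α⟫) • α ∈ Φ)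
    {γ : V} (hγ : γ ∈ Φ) (hγ0 : γ ≠ 0) : -γ ∈ Φ := by
  have h := hrefl γ hγ γ hγ
  rwa [mul_div_assoc, div_self (inner_self_ne_zero.mpr hγ0), mul_one, two_smul,
    sub_add_cancel_left] at h

lemma mem_or_forall_inner_eq_zero_of_reflection_mem (W : Submodule ℝ V) {γ : V} (hγ0 : γ ≠ 0)
    (hW : ∀ w ∈ W, w - (2 * ⟪w, γ⟫ / ⟪γ, γ⟫) • γ ∈ W) :
    γ ∈ W ∨ ∀ w ∈ W, ⟪w, γ⟫ = 0 := by
  refine or_iff_not_imp_right.mpr fun h => ?_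
  push Not at h
  obtain ⟨w, hw, hwγ⟩ := h
  have hc : 2 * ⟪w, γ⟫ / ⟪γ, γ⟫ ≠ 0 :=
    div_ne_zero (mul_ne_zero two_ne_zero hwγ) (inner_self_ne_zero.mpr hγ0)
  have : (2 * ⟪w, γ⟫ / ⟪γ, γ⟫) • γ ∈ W := by simpa using W.sub_mem hw (hW w hw)
  exact (W.smul_mem_iff hc).mp this

lemma reflection_mem_span_sdiff {Φ : Set V}
    (hrefl : ∀ α ∈ Φ, ∀ β ∈ Φ, β - (2 * ⟪β, α⟫ / ⟪α, α⟫) • α ∈ Φ)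
    (N : Submodule ℝ V) {γ : V} (hγ : γ ∈ Φ) {w : V} (hw : w ∈ span ℝ (Φ \ N)) :
    w - (2 * ⟪w, γ⟫ / ⟪γ, γ⟫) • γ ∈ span ℝ (Φ \ N) := by
  by_cases hγN : γ ∈ N
  · let s := Module.preReflection γ ((2 / ⟪γ, γ⟫) • innerₗ V γ)
    have hs : ∀ v, s v = v - (2 * ⟪v, γ⟫ / ⟪γ, γ⟫) • γ := fun v => by
      simp only [s, Module.preReflection_apply, LinearMap.smul_apply, innerₗ_apply_apply,
        smul_eq_mul, real_inner_comm γ v]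
      ring_nf
    suffices span ℝ (Φ \ N) ≤ (span ℝ (Φ \ N)).comap s by simpa [hs] using this hw
    rw [span_le]
    rintro β ⟨hβ, hβN⟩
    refine subset_span ⟨by simpa [hs] using hrefl γ hγ β hβ, fun h => hβN ?_⟩
    simpa [hs] using N.add_mem h (N.smul_mem (2 * ⟪β, γ⟫ / ⟪γ, γ⟫) hγN)
  · exact sub_mem hw (smul_mem _ _ (subset_span ⟨hγ, hγN⟩))

lemma span_sdiff_eq_top_of_irreducible {Φ : Finset V}
    (hspan : span ℝ (Φ : Set V) = ⊤) (h0 : (0 : V) ∉ Φ)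
    (hrefl : ∀ α ∈ Φ, ∀ β ∈ Φ, β - (2 * ⟪β, α⟫ / ⟪α, α⟫) • α ∈ Φ)
    (hirr : ∀ Φ₁ Φ₂ : Finset V, Φ₁.Nonempty → Φ₂.Nonempty →
      Φ₁ ∪ Φ₂ = Φ → Disjoint Φ₁ Φ₂ → ¬ (∀ α ∈ Φ₁, ∀ β ∈ Φ₂, ⟪α, β⟫ = 0))
    (N : Submodule ℝ V) {δ : V} (hδ : δ ∈ Φ) (hδN : δ ∉ N) :
    span ℝ ((Φ : Set V) \ N) = ⊤ := by
  set W := span ℝ ((Φ : Set V) \ N)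
  have hdich : ∀ γ ∈ Φ, γ ∈ W ∨ ∀ w ∈ W, ⟪w, γ⟫ = 0 := fun γ hγ =>
    mem_or_forall_inner_eq_zero_of_reflection_mem W (ne_of_mem_of_not_mem hγ h0)
      fun _ hw => reflection_mem_span_sdiff hrefl N hγ hw
  have hΦW : ∀ γ ∈ Φ, γ ∈ W := by
    by_contra! ⟨γ, hγ, hγW⟩
    refine hirr (Φ.filter (· ∈ W)) (Φ.filter (· ∉ W))
      ⟨δ, Finset.mem_filter.mpr ⟨hδ, subset_span ⟨hδ, hδN⟩⟩⟩
      ⟨γ, Finset.mem_filter.mpr ⟨hγ, hγW⟩⟩ (Finset.filter_union_filter_not_eq _ Φ)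
      (Finset.disjoint_filter_filter_not Φ Φ _) fun α hα β hβ => ?_
    rw [Finset.mem_filter] at hα hβ
    exact (hdich β hβ.1).resolve_left hβ.2 α hα.2
  rw [eq_top_iff, ← hspan, span_le]
  exact hΦW

end RootReflection

lemma mem_or_neg_mem_of_base {V : Type*} [AddCommGroup V] [Module ℝ V] {Φ Δ Φpos : Finset V}
    (hneg : ∀ γ ∈ Φ, -γ ∈ Φ)
    (hbase : ∀ β ∈ Φ, ∃ c : V → ℤ, β = ∑ α ∈ Δ, (c α : ℝ) • α ∧
      ((∀ α ∈ Δ, 0 ≤ c α) ∨ (∀ α ∈ Δ, c α ≤ 0)))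
    (hΦpos : ∀ β, β ∈ Φpos ↔ β ∈ Φ ∧ ∃ c : V → ℤ,
      β = ∑ α ∈ Δ, (c α : ℝ) • α ∧ ∀ α ∈ Δ, 0 ≤ c α)
    {γ : V} (hγ : γ ∈ Φ) : γ ∈ Φpos ∨ -γ ∈ Φpos := by
  obtain ⟨c, hc, hnonneg | hnonpos⟩ := hbase γ hγ
  · exact .inl ((hΦpos γ).mpr ⟨hγ, c, hc, hnonneg⟩)
  · refine .inr ((hΦpos _).mpr ⟨hneg γ hγ, -c, ?_, fun α hα => neg_nonneg.mpr (hnonpos α hα)⟩)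
    simp [hc, ← Finset.sum_neg_distrib]

theorem stmt_0_general {V : Type*} [NormedAddCommGroup V] [InnerProductSpace ℝ V]
    [FiniteDimensional ℝ V]
    (ℓ : ℕ) (hdim : Module.finrank ℝ V = ℓ)
    (Φ : Finset V)
    (hspan : Submodule.span ℝ (Φ : Set V) = ⊤)
    (h0 : (0 : V) ∉ Φ)
    (hrefl : ∀ α ∈ Φ, ∀ β ∈ Φ, β - (2 * ⟪β, α⟫ / ⟪α, α⟫) • α ∈ Φ)
    (hirr : ∀ Φ₁ Φ₂ : Finset V, Φ₁.Nonempty → Φ₂.Nonempty →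
      Φ₁ ∪ Φ₂ = Φ → Disjoint Φ₁ Φ₂ →
      ¬ (∀ α ∈ Φ₁, ∀ β ∈ Φ₂, ⟪α, β⟫ = 0))
    (Δ : Finset V) (hΔΦ : Δ ⊆ Φ)
    (hind : LinearIndependent ℝ (fun a : {x : V // x ∈ Δ} => (a : V)))
    (hbase : ∀ β ∈ Φ, ∃ c : V → ℤ, β = ∑ α ∈ Δ, (c α : ℝ) • α ∧
      ((∀ α ∈ Δ, 0 ≤ c α) ∨ (∀ α ∈ Δ, c α ≤ 0)))
    (Φpos : Finset V)
    (hΦpos : ∀ β, β ∈ Φpos ↔ β ∈ Φ ∧ ∃ c : V → ℤ,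
      β = ∑ α ∈ Δ, (c α : ℝ) • α ∧ ∀ α ∈ Δ, 0 ≤ c α)
    (S : Finset V) (hS : S ⊆ Δ) (hSne : S ≠ Δ) :
    ℓ ≤ (Φpos.filter (fun β => β ∉ Submodule.span ℝ (S : Set V))).card := by
  set N := span ℝ (S : Set V)
  set Ψ := Φpos.filter (· ∉ N)
  obtain ⟨δ, hδΔ, hδS⟩ := Finset.exists_of_ssubset (hS.ssubset_of_ne hSne)
  have hΔ : LinearIndepOn ℝ id (Δ : Set V) := hind.linearIndepOn_id' Subtype.range_coe
  have hSΔ : (S : Set V) ⊆ id '' ((Δ : Set V) \ {δ}) := fun x hx =>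
    ⟨x, ⟨hS hx, fun hxδ => hδS (hxδ ▸ hx)⟩, rfl⟩
  have hδN : δ ∉ N := fun h => hΔ.notMem_span hδΔ (span_mono hSΔ h)
  have hneg : ∀ γ ∈ Φ, -γ ∈ Φ := fun γ hγ =>
    neg_mem_of_reflection_closed hrefl hγ (ne_of_mem_of_not_mem hγ h0)
  have hΨ : span ℝ (Ψ : Set V) = ⊤ := by
    rw [eq_top_iff, ← span_sdiff_eq_top_of_irreducible hspan h0 hrefl hirr N (hΔΦ hδΔ) hδN,
      span_le]
    rintro γ ⟨hγ, hγN⟩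
    rcases mem_or_neg_mem_of_base hneg hbase hΦpos hγ with hpos | hpos
    · exact subset_span (Finset.mem_filter.mpr ⟨hpos, hγN⟩)
    · rw [← neg_neg γ]
      exact neg_mem (subset_span (Finset.mem_filter.mpr ⟨hpos, fun h => hγN (by simpa using h)⟩))
  calc ℓ = Module.finrank ℝ V := hdim.symm
    _ = Module.finrank ℝ (span ℝ (Ψ : Set V)) := by rw [hΨ, finrank_top]
    _ ≤ Ψ.card := finrank_span_finset_le_card Ψ

/-- For an irreducible reduced crystallographic root system `Φ` spanning an
`ℓ`-dimensional real inner product space `V`, with base `Δ` and positive system `Φ⁺`, and any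
proper subset `S ⊊ Δ`, the number of positive roots not lying in the span of `S` is at least
`ℓ`. -/
theorem stmt_0 {V : Type*} [NormedAddCommGroup V] [InnerProductSpace ℝ V]
    [FiniteDimensional ℝ V]
    (ℓ : ℕ) (hℓ : 1 ≤ ℓ) (hdim : Module.finrank ℝ V = ℓ)
    (Φ : Finset V)
    (hspan : Submodule.span ℝ (Φ : Set V) = ⊤)
    (h0 : (0 : V) ∉ Φ)
    (hrefl : ∀ α ∈ Φ, ∀ β ∈ Φ, β - (2 * ⟪β, α⟫ / ⟪α, α⟫) • α ∈ Φ)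
    (hint : ∀ α ∈ Φ, ∀ β ∈ Φ, ∃ n : ℤ, 2 * ⟪β, α⟫ / ⟪α, α⟫ = (n : ℝ))
    (hred : ∀ α ∈ Φ, ∀ t : ℝ, t • α ∈ Φ → t = 1 ∨ t = -1)
    (hirr : ∀ Φ₁ Φ₂ : Finset V, Φ₁.Nonempty → Φ₂.Nonempty →
      Φ₁ ∪ Φ₂ = Φ → Disjoint Φ₁ Φ₂ →
      ¬ (∀ α ∈ Φ₁, ∀ β ∈ Φ₂, ⟪α, β⟫ = 0))
    (Δ : Finset V) (hΔΦ : Δ ⊆ Φ)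
    (hind : LinearIndependent ℝ (fun a : {x : V // x ∈ Δ} => (a : V)))
    (hΔspan : Submodule.span ℝ (Δ : Set V) = ⊤)
    (hbase : ∀ β ∈ Φ, ∃ c : V → ℤ, β = ∑ α ∈ Δ, (c α : ℝ) • α ∧
      ((∀ α ∈ Δ, 0 ≤ c α) ∨ (∀ α ∈ Δ, c α ≤ 0)))
    (Φpos : Finset V)
    (hΦpos : ∀ β, β ∈ Φpos ↔ β ∈ Φ ∧ ∃ c : V → ℤ,
      β = ∑ α ∈ Δ, (c α : ℝ) • α ∧ ∀ α ∈ Δ, 0 ≤ c α)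
    (S : Finset V) (hS : S ⊆ Δ) (hSne : S ≠ Δ) :
    ℓ ≤ (Φpos.filter (fun β => β ∉ Submodule.span ℝ (S : Set V))).card :=
  stmt_0_general ℓ hdim Φ hspan h0 hrefl hirr Δ hΔΦ hind hbase Φpos hΦpos S hS hSne
end

section
/- Let ℓ ≥ 2 and work in ℝ^ℓ with standard basis e_1,…,e_ℓ. Let Φ⁺ = {e_a : 1 ≤ a ≤ ℓ} ∪ {e_a − e_b : 1 ≤ a < b ≤ ℓ} ∪ {e_a + e_b : 1 ≤ a < b ≤ ℓ} (the positive roots of the root system B_ℓ; it has ℓ² elements), and let the simple roots be α_j = e_j − e_{j+1} for 1 ≤ j ≤ ℓ−1 and α_ℓ = e_ℓ. Then for every 1 ≤ i ≤ ℓ: (a) the number of elements of Φ⁺ lying in the linear span of {α_j : 1 ≤ j ≤ ℓ, j ≠ i} equals i(i−1)/2 + (ℓ−i)²; (b) the number of elements of Φ⁺ not lying in that span, namely ℓ² − i(i−1)/2 − (ℓ−i)², is strictly greater than ℓ. -/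
open scoped RealInnerProductSpace

attribute [local instance] Classical.propDecidable

/-- The standard basis vector `e_j` (1-based) of `ℝ^ℓ`; zero for out-of-range indices. -/
noncomputable def E (ℓ : ℕ) (j : ℕ) : EuclideanSpace ℝ (Fin ℓ) :=
  if h : 1 ≤ j ∧ j ≤ ℓ then EuclideanSpace.single (⟨j - 1, by omega⟩ : Fin ℓ) (1 : ℝ) else 0

/-- The positive roots `e_a` (`1 ≤ a ≤ ℓ`), `e_a - e_b` and `e_a + e_b` (`1 ≤ a < b ≤ ℓ`)
of the root system `B_ℓ` in `ℝ^ℓ`. -/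
noncomputable def PhiB (ℓ : ℕ) : Finset (EuclideanSpace ℝ (Fin ℓ)) :=
  ((Finset.Icc 1 ℓ).image (fun a => E ℓ a)) ∪
  ((((Finset.Icc 1 ℓ) ×ˢ (Finset.Icc 1 ℓ)).filter (fun p => p.1 < p.2)).image
      (fun p => E ℓ p.1 - E ℓ p.2)) ∪
  ((((Finset.Icc 1 ℓ) ×ˢ (Finset.Icc 1 ℓ)).filter (fun p => p.1 < p.2)).image
      (fun p => E ℓ p.1 + E ℓ p.2))

/-- The simple root `α_j` of `B_ℓ`: `α_j = e_j - e_{j+1}` for `1 ≤ j ≤ ℓ-1` and `α_ℓ = e_ℓ`. -/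
noncomputable def alphaB (ℓ j : ℕ) : EuclideanSpace ℝ (Fin ℓ) :=
  if j = ℓ then E ℓ ℓ else E ℓ j - E ℓ (j + 1)

/-- The span of the simple roots `α_j`, `1 ≤ j ≤ ℓ`, `j ≠ i`, of `B_ℓ`. -/
noncomputable def spanB (ℓ i : ℕ) : Submodule ℝ (EuclideanSpace ℝ (Fin ℓ)) :=
  Submodule.span ℝ {v | ∃ j, 1 ≤ j ∧ j ≤ ℓ ∧ j ≠ i ∧ v = alphaB ℓ j}

/-!
The linear form `S_i(v) = v₁ + ⋯ + vᵢ` vanishes on every simple root other than `αᵢ`, and it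
detects membership in their span among the positive roots: `e_a` lies in the span iff `i < a`,
`e_a - e_b` iff `a` and `b` lie on the same side of `i`, and `e_a + e_b` iff `i < a`; the
memberships themselves are telescoping sums of simple roots. Counting the three families gives
`(ℓ - i) + C(i, 2) + 2 C(ℓ - i, 2) = C(i, 2) + (ℓ - i)²`, and `n + 2 C(n, 2) = n²` also gives
`|Φ⁺| = ℓ²`.
-/

open Finset

lemma E_apply (ℓ a : ℕ) (k : Fin ℓ) : E ℓ a k = if (k : ℕ) + 1 = a then 1 else 0 := by
  unfold E
  split_ifs <;> first | rfl | omega | (simp [Fin.ext_iff]; omega)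

lemma E_apply_pred {ℓ c : ℕ} (a : ℕ) (hc : 1 ≤ c) (hcℓ : c ≤ ℓ) :
    E ℓ a ⟨c - 1, by omega⟩ = if c = a then 1 else 0 := by
  rw [E_apply]
  congr 1
  simp only [eq_iff_iff]
  omega

section Coordinates

variable {ℓ a b c d : ℕ}

lemma E_inj (ha : 1 ≤ a) (haℓ : a ≤ ℓ) (h : E ℓ a = E ℓ c) : a = c := by
  have h1 := congrArg (· ⟨a - 1, by omega⟩) h
  simp only [E_apply_pred _ ha haℓ] at h1
  split_ifs at h1 <;> first | omega | norm_num at h1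

lemma E_sub_E_inj (ha : 1 ≤ a) (hab : a < b) (hbℓ : b ≤ ℓ)
    (h : E ℓ a - E ℓ b = E ℓ c - E ℓ d) : a = c ∧ b = d := by
  have h1 := congrArg (· ⟨a - 1, by omega⟩) h
  have h2 := congrArg (· ⟨b - 1, by omega⟩) h
  simp only [PiLp.sub_apply, E_apply_pred _ ha (hab.trans_le hbℓ).le,
    E_apply_pred _ (by omega : 1 ≤ b) hbℓ] at h1 h2
  constructor
  · split_ifs at h1 <;> first | omega | norm_num at h1
  · split_ifs at h2 <;> first | omega | norm_num at h2

lemma E_add_E_inj (ha : 1 ≤ a) (hab : a < b) (hbℓ : b ≤ ℓ) (hc : 1 ≤ c) (hcd : c < d)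
    (hdℓ : d ≤ ℓ) (h : E ℓ a + E ℓ b = E ℓ c + E ℓ d) : a = c ∧ b = d := by
  have h1 := congrArg (· ⟨a - 1, by omega⟩) h
  have h2 := congrArg (· ⟨c - 1, by omega⟩) h
  simp only [PiLp.add_apply, E_apply_pred _ ha (hab.trans_le hbℓ).le,
    E_apply_pred _ hc (hcd.trans_le hdℓ).le] at h1 h2
  obtain rfl : a = c := by split_ifs at h1 h2 <;> first | omega | simp at h1 h2
  exact ⟨rfl, E_inj (by omega) hbℓ (add_left_cancel h)⟩

end Coordinates

noncomputable def partialSum (ℓ i : ℕ) : EuclideanSpace ℝ (Fin ℓ) →ₗ[ℝ] ℝ where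
  toFun v := ∑ k ∈ univ.filter (fun k : Fin ℓ => (k : ℕ) < i), v k
  map_add' v w := by simp [sum_add_distrib]
  map_smul' c v := by simp [mul_sum]

lemma partialSum_E {ℓ a : ℕ} (i : ℕ) (ha : 1 ≤ a) (haℓ : a ≤ ℓ) :
    partialSum ℓ i (E ℓ a) = if a ≤ i then 1 else 0 := by
  have hk (k : Fin ℓ) : (k : ℕ) + 1 = a ↔ k = ⟨a - 1, by omega⟩ := by
    rw [Fin.ext_iff]; dsimp only; omega
  simp only [partialSum, LinearMap.coe_mk, AddHom.coe_mk, E_apply, hk, sum_ite_eq',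
    mem_filter, mem_univ, true_and]
  congr 1
  simp only [eq_iff_iff]
  omega

lemma partialSum_self_E {ℓ a : ℕ} (ha : 1 ≤ a) (haℓ : a ≤ ℓ) : partialSum ℓ ℓ (E ℓ a) = 1 := by
  rw [partialSum_E ℓ ha haℓ, if_pos haℓ]

lemma alphaB_self (ℓ : ℕ) : alphaB ℓ ℓ = E ℓ ℓ := if_pos rfl

lemma alphaB_of_lt {ℓ j : ℕ} (hj : j < ℓ) : alphaB ℓ j = E ℓ j - E ℓ (j + 1) := if_neg hj.ne

lemma alphaB_mem_spanB {ℓ i j : ℕ} (hj : 1 ≤ j) (hjℓ : j ≤ ℓ) (hji : j ≠ i) :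
    alphaB ℓ j ∈ spanB ℓ i :=
  Submodule.subset_span ⟨j, hj, hjℓ, hji, rfl⟩

lemma spanB_le_ker_partialSum {ℓ i : ℕ} (hiℓ : i ≤ ℓ) :
    spanB ℓ i ≤ LinearMap.ker (partialSum ℓ i) := by
  rw [spanB, Submodule.span_le]
  rintro _ ⟨j, hj, hjℓ, hji, rfl⟩
  rw [SetLike.mem_coe, LinearMap.mem_ker]
  rcases hjℓ.lt_or_eq with hjℓ | rfl
  · rw [alphaB_of_lt hjℓ, map_sub, partialSum_E i hj hjℓ.le, partialSum_E i (by omega) hjℓ]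
    split_ifs <;> first | omega | norm_num
  · rw [alphaB_self, partialSum_E i hj le_rfl, if_neg (by omega)]

section SpanMembership

variable {ℓ i a b : ℕ}

lemma E_sub_E_mem_spanB (ha : 1 ≤ a) (hab : a < b) (hbℓ : b ≤ ℓ) (hside : b ≤ i ∨ i < a) :
    E ℓ a - E ℓ b ∈ spanB ℓ i := by
  induction b, hab using Nat.le_induction with
  | base => exact alphaB_of_lt hbℓ ▸ alphaB_mem_spanB ha (by omega) (by omega)
  | succ b hab ih =>
    rw [← sub_add_sub_cancel _ (E ℓ b), ← alphaB_of_lt hbℓ]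
    exact add_mem (ih (by omega) (by omega)) (alphaB_mem_spanB (by omega) (by omega) (by omega))

lemma E_mem_spanB (hia : i < a) (haℓ : a ≤ ℓ) : E ℓ a ∈ spanB ℓ i := by
  have hℓ : E ℓ ℓ ∈ spanB ℓ i := alphaB_self ℓ ▸ alphaB_mem_spanB (by omega) le_rfl (by omega)
  rcases haℓ.lt_or_eq with haℓ | rfl
  · rw [← sub_add_cancel (E ℓ a) (E ℓ ℓ)]
    exact add_mem (E_sub_E_mem_spanB (by omega) haℓ le_rfl (Or.inr hia)) hℓ
  · exact hℓ

lemma E_add_E_mem_spanB (hia : i < a) (hab : a < b) (hbℓ : b ≤ ℓ) :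
    E ℓ a + E ℓ b ∈ spanB ℓ i := by
  rw [show E ℓ a + E ℓ b = (E ℓ a - E ℓ b) + (2 : ℝ) • E ℓ b by module]
  exact add_mem (E_sub_E_mem_spanB (by omega) hab hbℓ (Or.inr hia))
    (Submodule.smul_mem _ _ (E_mem_spanB (by omega) hbℓ))

lemma E_mem_spanB_iff (hiℓ : i ≤ ℓ) (ha : 1 ≤ a) (haℓ : a ≤ ℓ) :
    E ℓ a ∈ spanB ℓ i ↔ i < a := by
  refine ⟨fun h => ?_, fun h => E_mem_spanB h haℓ⟩
  simpa [partialSum_E i ha haℓ] using spanB_le_ker_partialSum hiℓ h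

lemma E_sub_E_mem_spanB_iff (hiℓ : i ≤ ℓ) (ha : 1 ≤ a) (hab : a < b) (hbℓ : b ≤ ℓ) :
    E ℓ a - E ℓ b ∈ spanB ℓ i ↔ b ≤ i ∨ i < a := by
  refine ⟨fun h => ?_, E_sub_E_mem_spanB ha hab hbℓ⟩
  have h0 := spanB_le_ker_partialSum hiℓ h
  rw [LinearMap.mem_ker, map_sub, partialSum_E i ha (by omega), partialSum_E i (by omega) hbℓ]
    at h0
  split_ifs at h0 <;> first | omega | norm_num at h0

lemma E_add_E_mem_spanB_iff (hiℓ : i ≤ ℓ) (ha : 1 ≤ a) (hab : a < b) (hbℓ : b ≤ ℓ) :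
    E ℓ a + E ℓ b ∈ spanB ℓ i ↔ i < a := by
  refine ⟨fun h => ?_, fun h => E_add_E_mem_spanB h hab hbℓ⟩
  have h0 := spanB_le_ker_partialSum hiℓ h
  rw [LinearMap.mem_ker, map_add, partialSum_E i ha (by omega), partialSum_E i (by omega) hbℓ]
    at h0
  split_ifs at h0 <;> first | omega | norm_num at h0

end SpanMembership

noncomputable def ltPairs {α : Type*} [LinearOrder α] (s : Finset α) : Finset (α × α) :=
  {p ∈ s ×ˢ s | p.1 < p.2}

lemma card_ltPairs {α : Type*} [LinearOrder α] (s : Finset α) :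
    #(ltPairs s) = (#s).choose 2 := by
  rw [ltPairs]
  convert card_product_filter_lt (s := s)

lemma mem_ltPairs_Icc {m n : ℕ} {p : ℕ × ℕ} :
    p ∈ ltPairs (Icc m n) ↔ m ≤ p.1 ∧ p.1 < p.2 ∧ p.2 ≤ n := by
  simp only [ltPairs, mem_filter, mem_product, mem_Icc]
  omega

section Counting

variable (ℓ : ℕ)

lemma PhiB_eq : PhiB ℓ = (Icc 1 ℓ).image (E ℓ) ∪
    (ltPairs (Icc 1 ℓ)).image (fun p => E ℓ p.1 - E ℓ p.2) ∪
    (ltPairs (Icc 1 ℓ)).image (fun p => E ℓ p.1 + E ℓ p.2) := by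
  unfold PhiB ltPairs
  congr!

lemma injOn_E : Set.InjOn (E ℓ) (Icc 1 ℓ) := fun _ ha _ _ h =>
  E_inj (mem_Icc.1 ha).1 (mem_Icc.1 ha).2 h

lemma injOn_E_sub_E : Set.InjOn (fun p : ℕ × ℕ => E ℓ p.1 - E ℓ p.2) (ltPairs (Icc 1 ℓ)) := by
  intro p hp q _ h
  obtain ⟨hp1, hp12, hp2⟩ := mem_ltPairs_Icc.1 hp
  have := E_sub_E_inj hp1 hp12 hp2 h
  exact Prod.ext this.1 this.2

lemma injOn_E_add_E : Set.InjOn (fun p : ℕ × ℕ => E ℓ p.1 + E ℓ p.2) (ltPairs (Icc 1 ℓ)) := by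
  intro p hp q hq h
  obtain ⟨hp1, hp12, hp2⟩ := mem_ltPairs_Icc.1 hp
  obtain ⟨hq1, hq12, hq2⟩ := mem_ltPairs_Icc.1 hq
  have := E_add_E_inj hp1 hp12 hp2 hq1 hq12 hq2 h
  exact Prod.ext this.1 this.2

/- The three families are told apart by the coordinate sum `partialSum ℓ ℓ`, which is `1` on
`e_a`, `0` on `e_a - e_b` and `2` on `e_a + e_b`. -/
lemma disjoint_image_E_image_E_sub_E :
    Disjoint ((Icc 1 ℓ).image (E ℓ)) ((ltPairs (Icc 1 ℓ)).image fun p => E ℓ p.1 - E ℓ p.2) := by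
  simp only [disjoint_left, mem_image, mem_Icc, mem_ltPairs_Icc]
  rintro _ ⟨a, ⟨ha, haℓ⟩, rfl⟩ ⟨⟨c, d⟩, ⟨hc, hcd, hdℓ⟩, h⟩
  have := congrArg (partialSum ℓ ℓ) h
  rw [map_sub, partialSum_self_E hc (by omega), partialSum_self_E (by omega) hdℓ,
    partialSum_self_E ha haℓ] at this
  norm_num at this

lemma disjoint_image_E_image_E_add_E :
    Disjoint ((Icc 1 ℓ).image (E ℓ)) ((ltPairs (Icc 1 ℓ)).image fun p => E ℓ p.1 + E ℓ p.2) := by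
  simp only [disjoint_left, mem_image, mem_Icc, mem_ltPairs_Icc]
  rintro _ ⟨a, ⟨ha, haℓ⟩, rfl⟩ ⟨⟨c, d⟩, ⟨hc, hcd, hdℓ⟩, h⟩
  have := congrArg (partialSum ℓ ℓ) h
  rw [map_add, partialSum_self_E hc (by omega), partialSum_self_E (by omega) hdℓ,
    partialSum_self_E ha haℓ] at this
  norm_num at this

lemma disjoint_image_E_sub_E_image_E_add_E :
    Disjoint ((ltPairs (Icc 1 ℓ)).image fun p => E ℓ p.1 - E ℓ p.2)
      ((ltPairs (Icc 1 ℓ)).image fun p => E ℓ p.1 + E ℓ p.2) := by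
  simp only [disjoint_left, mem_image, mem_ltPairs_Icc]
  rintro _ ⟨⟨a, b⟩, ⟨ha, hab, hbℓ⟩, rfl⟩ ⟨⟨c, d⟩, ⟨hc, hcd, hdℓ⟩, h⟩
  have := congrArg (partialSum ℓ ℓ) h
  rw [map_add, map_sub, partialSum_self_E hc (by omega), partialSum_self_E (by omega) hdℓ,
    partialSum_self_E ha (by omega), partialSum_self_E (by omega) hbℓ] at this
  norm_num at this

lemma card_filter_PhiB (P : EuclideanSpace ℝ (Fin ℓ) → Prop) :
    #{v ∈ PhiB ℓ | P v} = #{a ∈ Icc 1 ℓ | P (E ℓ a)} +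
      #{p ∈ ltPairs (Icc 1 ℓ) | P (E ℓ p.1 - E ℓ p.2)} +
      #{p ∈ ltPairs (Icc 1 ℓ) | P (E ℓ p.1 + E ℓ p.2)} := by
  rw [PhiB_eq, filter_union, filter_union,
    card_union_of_disjoint (disjoint_union_left.2
      ⟨disjoint_filter_filter (disjoint_image_E_image_E_add_E ℓ),
        disjoint_filter_filter (disjoint_image_E_sub_E_image_E_add_E ℓ)⟩),
    card_union_of_disjoint (disjoint_filter_filter (disjoint_image_E_image_E_sub_E ℓ)),
    filter_image, filter_image, filter_image,
    card_image_of_injOn ((injOn_E ℓ).mono (coe_subset.2 (filter_subset _ _))),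
    card_image_of_injOn ((injOn_E_sub_E ℓ).mono (coe_subset.2 (filter_subset _ _))),
    card_image_of_injOn ((injOn_E_add_E ℓ).mono (coe_subset.2 (filter_subset _ _)))]

end Counting

lemma add_two_mul_choose_two (n : ℕ) : n + 2 * n.choose 2 = n ^ 2 := by
  rw [Nat.choose_two_right, Nat.mul_div_cancel' (Nat.even_mul_pred_self n).two_dvd]
  rcases n with _ | n
  · rfl
  · rw [Nat.add_sub_cancel]
    ring

lemma card_PhiB (ℓ : ℕ) : #(PhiB ℓ) = ℓ ^ 2 := by
  have h := card_filter_PhiB ℓ (fun _ => True)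
  simp only [filter_true] at h
  rw [h, card_ltPairs, Nat.card_Icc, Nat.add_sub_cancel, ← add_two_mul_choose_two]
  ring

section CountingInSpan

variable {ℓ i : ℕ}

lemma filter_E_mem_spanB (hiℓ : i ≤ ℓ) :
    {a ∈ Icc 1 ℓ | E ℓ a ∈ spanB ℓ i} = Icc (i + 1) ℓ := by
  ext a
  simp only [mem_filter, mem_Icc]
  constructor
  · rintro ⟨⟨ha, haℓ⟩, hmem⟩
    exact ⟨(E_mem_spanB_iff hiℓ ha haℓ).1 hmem, haℓ⟩
  · rintro ⟨hia, haℓ⟩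
    exact ⟨⟨by omega, haℓ⟩, E_mem_spanB hia haℓ⟩

lemma filter_E_sub_E_mem_spanB (hiℓ : i ≤ ℓ) :
    {p ∈ ltPairs (Icc 1 ℓ) | E ℓ p.1 - E ℓ p.2 ∈ spanB ℓ i} =
      ltPairs (Icc 1 i) ∪ ltPairs (Icc (i + 1) ℓ) := by
  ext p
  simp only [mem_filter, mem_union, mem_ltPairs_Icc]
  constructor
  · rintro ⟨⟨ha, hab, hbℓ⟩, hmem⟩
    have := (E_sub_E_mem_spanB_iff hiℓ ha hab hbℓ).1 hmem
    omega
  · intro h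
    exact ⟨by omega, E_sub_E_mem_spanB (by omega) (by omega) (by omega) (by omega)⟩

lemma filter_E_add_E_mem_spanB (hiℓ : i ≤ ℓ) :
    {p ∈ ltPairs (Icc 1 ℓ) | E ℓ p.1 + E ℓ p.2 ∈ spanB ℓ i} = ltPairs (Icc (i + 1) ℓ) := by
  ext p
  simp only [mem_filter, mem_ltPairs_Icc]
  constructor
  · rintro ⟨⟨ha, hab, hbℓ⟩, hmem⟩
    exact ⟨(E_add_E_mem_spanB_iff hiℓ ha hab hbℓ).1 hmem, hab, hbℓ⟩
  · rintro ⟨hia, hab, hbℓ⟩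
    exact ⟨⟨by omega, hab, hbℓ⟩, E_add_E_mem_spanB hia hab hbℓ⟩

lemma card_filter_mem_spanB (hiℓ : i ≤ ℓ) :
    #{v ∈ PhiB ℓ | v ∈ spanB ℓ i} = i.choose 2 + (ℓ - i) ^ 2 := by
  have hdisj : Disjoint (ltPairs (Icc 1 i)) (ltPairs (Icc (i + 1) ℓ)) := by
    rw [disjoint_left]
    intro p hp hp'
    rw [mem_ltPairs_Icc] at hp hp'
    omega
  rw [card_filter_PhiB, filter_E_mem_spanB hiℓ, filter_E_sub_E_mem_spanB hiℓ,
    filter_E_add_E_mem_spanB hiℓ, card_union_of_disjoint hdisj, card_ltPairs, card_ltPairs,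
    Nat.card_Icc, Nat.card_Icc, Nat.add_sub_cancel, Nat.add_sub_add_right,
    ← add_two_mul_choose_two (ℓ - i)]
  ring

end CountingInSpan

lemma add_choose_two_add_sq_lt_sq {ℓ i : ℕ} (hℓ : 2 ≤ ℓ) (hi : 1 ≤ i) (hiℓ : i ≤ ℓ) :
    ℓ + i.choose 2 + (ℓ - i) ^ 2 < ℓ ^ 2 := by
  obtain ⟨j, rfl⟩ := Nat.exists_eq_add_of_le hiℓ
  have hi2 := add_two_mul_choose_two i
  rw [Nat.add_sub_cancel_left]
  rcases Nat.eq_zero_or_pos j with rfl | hj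
  · have : 0 < i.choose 2 := Nat.choose_pos (by omega)
    nlinarith
  · nlinarith

/-- Counting positive roots of `B_ℓ` in and off the span of the simple roots
other than `α_i`. -/
theorem stmt_2 (ℓ : ℕ) (hℓ : 2 ≤ ℓ) (i : ℕ) (hi1 : 1 ≤ i) (hiℓ : i ≤ ℓ) :
    (PhiB ℓ).card = ℓ ^ 2 ∧
    ((PhiB ℓ).filter (fun v => v ∈ spanB ℓ i)).card = i * (i - 1) / 2 + (ℓ - i) ^ 2 ∧
    ((PhiB ℓ).filter (fun v => v ∉ spanB ℓ i)).card
        = ℓ ^ 2 - i * (i - 1) / 2 - (ℓ - i) ^ 2 ∧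
    ℓ < ℓ ^ 2 - i * (i - 1) / 2 - (ℓ - i) ^ 2 := by
  rw [← Nat.choose_two_right]
  have hin := card_filter_mem_spanB hiℓ
  have hsplit := card_filter_add_card_filter_not (s := PhiB ℓ) (p := fun v => v ∈ spanB ℓ i)
  have hlt := add_choose_two_add_sq_lt_sq hℓ hi1 hiℓ
  rw [card_PhiB] at hsplit
  exact ⟨card_PhiB ℓ, hin, by omega, by omega⟩
end

section
/- Let ℓ ≥ 2, let q ≥ 2 be a real number, and let 1 ≤ m ≤ n ≤ ℓ be integers. Let w : ℝ^ℓ → ℝ^ℓ be the linear map determined by w(e_j) = e_{j+1} for m ≤ j ≤ n−1, w(e_n) = e_m, and w(e_j) = e_j for all other j. Suppose real numbers x_1 > x_2 > ⋯ > x_m > 0 are given. Then there exist real numbers x_{m+1} > x_{m+2} > ⋯ > x_{min(n+1,ℓ)} > 0 with x_m > x_{m+1} (no new numbers are chosen when m = min(n+1,ℓ)), such that for every choice of real numbers x_{n+2} > x_{n+3} > ⋯ > x_ℓ > 0 with x_{n+1} > x_{n+2} (this choice being empty when n+1 ≥ ℓ), the vector x = (x_1,…,x_ℓ) satisfies ⟨qx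 − wx, e_i − e_{i+1}⟩ > 0 for all 1 ≤ i ≤ ℓ−1, and moreover ⟨qx − wx, e_n − e_{n+1}⟩ > x_{n+1} in case n ≤ ℓ−1. -/
/-!
`w` permutes coordinates: `⟨w x, e_k⟩ = x_{τ k}`, where `τ` is the inverse of the cycle
`m ↦ m + 1 ↦ ⋯ ↦ n ↦ m`. Hence
`⟨q x - w x, e_i - e_{i+1}⟩ = q (x_i - x_{i+1}) - (x_{τ i} - x_{τ (i+1)})`,
which is `(q - 1) (x_i - x_{i+1}) > 0` whenever `τ` fixes `i` and `i + 1`.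

Continue `x` by the arithmetic progression `x_j = x_m - (j - m) d` on `[m, n]` and put
`x_{n+1} = d`. Inside the progression the expression is `(q - 1) d` or `(q + n - m) d`.
At `i = m - 1` and `i = n` it tends, as `d → 0`, to `(q - 1) (x_{m-1} - x_m)` and to
`(q - 1) x_m` (which must beat `x_{n+1} = d`); so every small enough `d > 0` works,
whatever the tail `x_{n+2}, …, x_ℓ`.
-/

open scoped RealInnerProductSpace

/-- The vector `(x_1, …, x_ℓ) ∈ ℝ^ℓ` built from a (1-based) sequence of reals. -/
noncomputable def vec (ℓ : ℕ) (x : ℕ → ℝ) : EuclideanSpace ℝ (Fin ℓ) :=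
  WithLp.toLp 2 (fun i : Fin ℓ => x (i.1 + 1))

open Set Filter Topology

def cycleIcc (m n : ℕ) (h : m ≤ n) : Equiv.Perm ℕ where
  toFun j := if j = n then m else if m ≤ j ∧ j < n then j + 1 else j
  invFun k := if k = m then n else if m < k ∧ k ≤ n then k - 1 else k
  left_inv j := by dsimp only; split_ifs <;> omega
  right_inv k := by dsimp only; split_ifs <;> omega

section cycleIcc

variable {m n : ℕ} {h : m ≤ n}

theorem cycleIcc_apply (j : ℕ) :
    cycleIcc m n h j = if j = n then m else if m ≤ j ∧ j < n then j + 1 else j := rfl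

theorem cycleIcc_symm_apply (k : ℕ) :
    (cycleIcc m n h).symm k = if k = m then n else if m < k ∧ k ≤ n then k - 1 else k := rfl

theorem cycleIcc_symm_apply_of_lt {k : ℕ} (hk : k < m) : (cycleIcc m n h).symm k = k := by
  rw [cycleIcc_symm_apply]; split_ifs <;> omega

theorem cycleIcc_symm_apply_of_gt {k : ℕ} (hk : n < k) : (cycleIcc m n h).symm k = k := by
  rw [cycleIcc_symm_apply]; split_ifs <;> omega

theorem cycleIcc_symm_apply_left : (cycleIcc m n h).symm m = n := by
  rw [cycleIcc_symm_apply, if_pos rfl]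

theorem cycleIcc_symm_apply_of_mem_Ioc {k : ℕ} (hk : k ∈ Ioc m n) :
    (cycleIcc m n h).symm k = k - 1 := by
  rw [cycleIcc_symm_apply]; split_ifs <;> grind

theorem mapsTo_cycleIcc_symm {ℓ : ℕ} (hm : 1 ≤ m) (hn : n ≤ ℓ) :
    MapsTo (cycleIcc m n h).symm (Icc 1 ℓ) (Icc 1 ℓ) := by
  intro k hk
  rw [cycleIcc_symm_apply]
  simp only [mem_Icc] at hk ⊢
  split_ifs <;> omega

end cycleIcc

theorem map_E_eq_E_cycleIcc {ℓ m n : ℕ} (hmn : m ≤ n)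
    (w : EuclideanSpace ℝ (Fin ℓ) →ₗ[ℝ] EuclideanSpace ℝ (Fin ℓ))
    (hw1 : ∀ j, m ≤ j → j + 1 ≤ n → w (E ℓ j) = E ℓ (j + 1)) (hw2 : w (E ℓ n) = E ℓ m)
    (hw3 : ∀ j, 1 ≤ j → j ≤ ℓ → (j < m ∨ n < j) → w (E ℓ j) = E ℓ j) :
    ∀ j ∈ Icc 1 ℓ, w (E ℓ j) = E ℓ (cycleIcc m n hmn j) := by
  rintro j ⟨hj1, hjℓ⟩
  rw [cycleIcc_apply]
  split_ifs with hjn hjmn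
  · rw [hjn, hw2]
  · exact hw1 j hjmn.1 hjmn.2
  · exact hw3 j hj1 hjℓ (by omega)

theorem inner_E_E (ℓ a b : ℕ) : ⟪E ℓ a, E ℓ b⟫ = if a = b ∧ a ∈ Icc 1 ℓ then 1 else 0 := by
  unfold E
  split_ifs <;> simp_all [EuclideanSpace.inner_single_left, Fin.ext_iff]
  all_goals omega

theorem inner_vec_E {ℓ a : ℕ} (z : ℕ → ℝ) (ha : a ∈ Icc 1 ℓ) : ⟪vec ℓ z, E ℓ a⟫ = z a := by
  rw [mem_Icc] at ha
  rw [E, dif_pos ha, EuclideanSpace.inner_single_right, one_mul, conj_trivial]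
  exact congrArg z (Nat.sub_add_cancel ha.1)

theorem inner_map_vec_eq_sum {ℓ : ℕ} (f : EuclideanSpace ℝ (Fin ℓ) →ₗ[ℝ] EuclideanSpace ℝ (Fin ℓ))
    (z : ℕ → ℝ) (v : EuclideanSpace ℝ (Fin ℓ)) :
    ⟪f (vec ℓ z), v⟫ = ∑ i : Fin ℓ, z (i + 1) * ⟪f (E ℓ (i + 1)), v⟫ := by
  have hvec : vec ℓ z = ∑ i : Fin ℓ, z (i + 1) • E ℓ (i + 1) := by
    rw [← (EuclideanSpace.basisFun (Fin ℓ) ℝ).sum_repr (vec ℓ z)]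
    refine Finset.sum_congr rfl fun i _ => ?_
    rw [EuclideanSpace.basisFun_repr, EuclideanSpace.basisFun_apply, E,
      dif_pos ⟨by omega, by omega⟩]
    rfl
  simp only [hvec, map_sum, map_smul, sum_inner, real_inner_smul_left]

theorem inner_map_vec_E {ℓ a : ℕ} (w : EuclideanSpace ℝ (Fin ℓ) →ₗ[ℝ] EuclideanSpace ℝ (Fin ℓ))
    (σ : Equiv.Perm ℕ) (hw : ∀ j ∈ Icc 1 ℓ, w (E ℓ j) = E ℓ (σ j))
    (z : ℕ → ℝ) (ha : a ∈ Icc 1 ℓ) (hσa : σ.symm a ∈ Icc 1 ℓ) :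
    ⟪w (vec ℓ z), E ℓ a⟫ = z (σ.symm a) := by
  rw [← inner_vec_E z hσa, inner_map_vec_eq_sum, ← LinearMap.id_apply (R := ℝ) (vec ℓ z),
    inner_map_vec_eq_sum]
  refine Finset.sum_congr rfl fun i _ => ?_
  have hi : (i : ℕ) + 1 ∈ Icc 1 ℓ := ⟨by omega, by omega⟩
  rw [hw _ hi, LinearMap.id_apply, inner_E_E, inner_E_E]
  simp only [← Equiv.eq_symm_apply]
  exact congrArg _ <| if_congr
    (and_congr_right fun h => iff_of_true (by rwa [h, Equiv.apply_symm_apply]) hi) rfl rfl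

theorem inner_smul_sub_map_vec_E_sub {ℓ : ℕ} (q : ℝ)
    (w : EuclideanSpace ℝ (Fin ℓ) →ₗ[ℝ] EuclideanSpace ℝ (Fin ℓ))
    (σ : Equiv.Perm ℕ) (hw : ∀ j ∈ Icc 1 ℓ, w (E ℓ j) = E ℓ (σ j))
    (hσ : MapsTo σ.symm (Icc 1 ℓ) (Icc 1 ℓ)) (z : ℕ → ℝ) {a b : ℕ} (ha : a ∈ Icc 1 ℓ)
    (hb : b ∈ Icc 1 ℓ) :
    ⟪q • vec ℓ z - w (vec ℓ z), E ℓ a - E ℓ b⟫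
      = q * (z a - z b) - (z (σ.symm a) - z (σ.symm b)) := by
  simp only [inner_sub_left, inner_sub_right, real_inner_smul_left, inner_vec_E z ha,
    inner_vec_E z hb, inner_map_vec_E w σ hw z ha (hσ ha), inner_map_vec_E w σ hw z hb (hσ hb)]
  ring

def extendByProgression (x : ℕ → ℝ) (m n : ℕ) (d : ℝ) (j : ℕ) : ℝ :=
  if j ≤ m then x j else if j ≤ n then x m - (j - m) * d else d

section extendByProgression

variable {x : ℕ → ℝ} {m n j : ℕ} {d : ℝ}

theorem extendByProgression_of_le (hj : j ≤ m) : extendByProgression x m n d j = x j := by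
  rw [extendByProgression, if_pos hj]

theorem extendByProgression_of_mem_Icc (hj : j ∈ Icc m n) :
    extendByProgression x m n d j = x m - (j - m) * d := by
  rw [extendByProgression]
  split_ifs with hjm hjn
  · rw [le_antisymm hjm hj.1, sub_self, zero_mul, sub_zero]
  · rfl
  · exact absurd hj.2 hjn

theorem extendByProgression_of_gt (hj : n < j) (hmn : m ≤ n) :
    extendByProgression x m n d j = d := by
  rw [extendByProgression, if_neg (by omega), if_neg (by omega)]

theorem extendByProgression_succ_lt (hmn : m ≤ n) (hd : 0 < d) (hdx : (n - m + 1) * d < x m)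
    (hj : j ∈ Icc m n) : extendByProgression x m n d (j + 1) < extendByProgression x m n d j := by
  rw [extendByProgression_of_mem_Icc hj]
  rcases hj.2.lt_or_eq with hjn | rfl
  · rw [extendByProgression_of_mem_Icc ⟨hj.1.trans j.le_succ, hjn⟩]
    push_cast
    linarith
  · rw [extendByProgression_of_gt (Nat.lt_succ_self j) hmn]
    linarith

theorem extendByProgression_pos (hmn : m ≤ n) (hd : 0 < d) (hdx : (n - m + 1) * d < x m)
    (hj : m ≤ j) : 0 < extendByProgression x m n d j := by
  rcases le_or_gt j n with hjn | hjn
  · rw [extendByProgression_of_mem_Icc ⟨hj, hjn⟩]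
    have : (j : ℝ) ≤ n := by exact_mod_cast hjn
    nlinarith
  · rw [extendByProgression_of_gt hjn hmn]
    exact hd

end extendByProgression

theorem eventually_mul_lt (c : ℝ) {K : ℝ} (hK : 0 < K) : ∀ᶠ d in 𝓝[>] (0 : ℝ), c * d < K := by
  have h : Tendsto (fun d : ℝ => c * d) (𝓝[>] 0) (𝓝 0) := by
    simpa using (tendsto_nhdsWithin_of_tendsto_nhds (tendsto_id (x := 𝓝 (0 : ℝ)))).const_mul c
  exact h.eventually_lt_const hK

-- The three bounds are those needed at `i = m - 1`, for `x_n > d`, and at `i = n`.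
theorem exists_pos_small_step {m : ℕ} (n : ℕ) {q : ℝ} {x : ℕ → ℝ} (hq : 1 < q)
    (hx : ∀ j, 1 ≤ j → j < m → x (j + 1) < x j) (hxm : 0 < x m) :
    ∃ d : ℝ, 0 < d ∧ (∀ j < m, 1 ≤ j → (n - m) * d < (q - 1) * (x j - x (j + 1))) ∧
      (n - m + 1) * d < x m ∧ (q + 1 + (q - 1) * (n - m)) * d < (q - 1) * x m := by
  refine (eventually_mem_nhdsWithin.and (((finite_Iio m).eventually_all.2 fun j hj => ?_).and
    ((eventually_mul_lt _ hxm).and (eventually_mul_lt _ (by nlinarith))))).exists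
  exact eventually_imp_distrib_left.2 fun hj1 =>
    eventually_mul_lt _ (mul_pos (by linarith) (sub_pos.2 (hx j hj1 hj)))

section gap

variable {ℓ m n : ℕ} {hmn : m ≤ n} {q d : ℝ} {z : ℕ → ℝ}

theorem cycleIcc_gap_at_right (hd : 0 < d)
    (hmid : ∀ j ∈ Icc m n, z j = z m - (j - m) * d) (hnext : z (n + 1) = d)
    (hnd : (q + 1 + (q - 1) * (n - m)) * d < (q - 1) * z m) :
    z (n + 1) < q * (z n - z (n + 1))
      - (z ((cycleIcc m n hmn).symm n) - z ((cycleIcc m n hmn).symm (n + 1))) := by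
  rw [cycleIcc_symm_apply_of_gt (Nat.lt_succ_self n), hnext, hmid n ⟨hmn, le_rfl⟩]
  rcases hmn.lt_or_eq with hlt | rfl
  · obtain ⟨k, rfl⟩ := Nat.exists_eq_add_of_lt hlt
    rw [cycleIcc_symm_apply_of_mem_Ioc ⟨by omega, le_rfl⟩, Nat.add_sub_cancel,
      hmid (m + k) ⟨by omega, by omega⟩]
    push_cast at hnd ⊢
    linarith
  · rw [cycleIcc_symm_apply_left]
    linarith

theorem cycleIcc_gap_pos (hq : 1 < q) (hd : 0 < d)
    (hhead : ∀ j, 1 ≤ j → j < m → z (j + 1) < z j)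
    (hstep : ∀ j, 1 ≤ j → j < m → (n - m) * d < (q - 1) * (z j - z (j + 1)))
    (hmid : ∀ j ∈ Icc m n, z j = z m - (j - m) * d) (hnext : n + 1 ≤ ℓ → z (n + 1) = d)
    (hnd : (q + 1 + (q - 1) * (n - m)) * d < (q - 1) * z m)
    (htail : ∀ j, n + 1 ≤ j → j < ℓ → z (j + 1) < z j) {i : ℕ} (hi : 1 ≤ i) (hiℓ : i + 1 ≤ ℓ) :
    0 < q * (z i - z (i + 1))
      - (z ((cycleIcc m n hmn).symm i) - z ((cycleIcc m n hmn).symm (i + 1))) := by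
  have hfixed : z (i + 1) < z i → 0 < q * (z i - z (i + 1)) - (z i - z (i + 1)) := fun h => by
    nlinarith
  have hnm : (m : ℝ) ≤ n := by exact_mod_cast hmn
  rcases (by omega : i + 1 < m ∨ i + 1 = m ∨ i = m ∧ m < n ∨ m < i ∧ i < n ∨ i = n ∨ n < i)
    with h | rfl | ⟨rfl, h⟩ | ⟨hmi, hin⟩ | rfl | h
  · rw [cycleIcc_symm_apply_of_lt h, cycleIcc_symm_apply_of_lt (by omega)]
    exact hfixed (hhead i hi (by omega))
  · rw [cycleIcc_symm_apply_of_lt (Nat.lt_add_one i), cycleIcc_symm_apply_left,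
      hmid n ⟨hmn, le_rfl⟩]
    linarith [hstep i hi (Nat.lt_add_one i)]
  · rw [cycleIcc_symm_apply_left, cycleIcc_symm_apply_of_mem_Ioc ⟨Nat.lt_add_one i, h⟩,
      Nat.add_sub_cancel, hmid n ⟨hmn, le_rfl⟩, hmid (i + 1) ⟨by omega, h⟩]
    push_cast
    nlinarith
  · rw [cycleIcc_symm_apply_of_mem_Ioc ⟨hmi, hin.le⟩,
      cycleIcc_symm_apply_of_mem_Ioc ⟨hmi.trans (Nat.lt_add_one i), hin⟩, Nat.add_sub_cancel,
      hmid (i - 1) ⟨by omega, by omega⟩, hmid i ⟨hmi.le, hin.le⟩, hmid (i + 1) ⟨by omega, hin⟩,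
      Nat.cast_sub (by omega)]
    push_cast
    nlinarith
  · linarith [cycleIcc_gap_at_right (hmn := hmn) hd hmid (hnext hiℓ) hnd, hnext hiℓ]
  · rw [cycleIcc_symm_apply_of_gt h, cycleIcc_symm_apply_of_gt (by omega)]
    exact hfixed (htail i h (by omega))

end gap

theorem stmt_4_general (ℓ : ℕ) (q : ℝ) (hq : 2 ≤ q)
    (m n : ℕ) (hm : 1 ≤ m) (hmn : m ≤ n) (hn : n ≤ ℓ)
    (w : EuclideanSpace ℝ (Fin ℓ) →ₗ[ℝ] EuclideanSpace ℝ (Fin ℓ))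
    (hw1 : ∀ j, m ≤ j → j + 1 ≤ n → w (E ℓ j) = E ℓ (j + 1))
    (hw2 : w (E ℓ n) = E ℓ m)
    (hw3 : ∀ j, 1 ≤ j → j ≤ ℓ → (j < m ∨ n < j) → w (E ℓ j) = E ℓ j)
    (x : ℕ → ℝ)
    (hx : ∀ j, 1 ≤ j → j < m → x (j + 1) < x j) (hxm : 0 < x m) :
    ∃ y : ℕ → ℝ,
      (∀ j, j ≤ m → y j = x j) ∧
      (∀ j, m ≤ j → j < min (n + 1) ℓ → y (j + 1) < y j) ∧
      0 < y (min (n + 1) ℓ) ∧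
      ∀ z : ℕ → ℝ,
        (∀ j, j ≤ min (n + 1) ℓ → z j = y j) →
        (∀ j, n + 1 ≤ j → j < ℓ → z (j + 1) < z j) →
        0 < z ℓ →
        (∀ i, 1 ≤ i → i + 1 ≤ ℓ →
          0 < ⟪q • vec ℓ z - w (vec ℓ z), E ℓ i - E ℓ (i + 1)⟫) ∧
        (n + 1 ≤ ℓ →
          z (n + 1) < ⟪q • vec ℓ z - w (vec ℓ z), E ℓ n - E ℓ (n + 1)⟫) := by
  have hq1 : 1 < q := by linarith
  obtain ⟨d, hd, hstep, hdx, hnd⟩ := exists_pos_small_step n hq1 hx hxm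
  refine ⟨extendByProgression x m n d, fun j hj => extendByProgression_of_le hj,
    fun j hj hjn => extendByProgression_succ_lt hmn hd hdx ⟨hj, by omega⟩,
    extendByProgression_pos hmn hd hdx (by omega), fun z hz htail _ => ?_⟩
  have hzx : ∀ j ≤ m, z j = x j := fun j hj => by
    rw [hz j (by omega), extendByProgression_of_le hj]
  have hmid : ∀ j ∈ Icc m n, z j = z m - (j - m) * d := fun j hj => by
    rw [hz j (by grind), extendByProgression_of_mem_Icc hj, hzx m le_rfl]
  have hnext : n + 1 ≤ ℓ → z (n + 1) = d := fun h => by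
    rw [hz (n + 1) (by omega), extendByProgression_of_gt (Nat.lt_add_one n) hmn]
  have hzstep : ∀ j, 1 ≤ j → j < m → (n - m) * d < (q - 1) * (z j - z (j + 1)) :=
    fun j hj1 hjm => by rw [hzx j hjm.le, hzx (j + 1) hjm]; exact hstep j hjm hj1
  have hcoord := @inner_smul_sub_map_vec_E_sub ℓ q w _ (map_E_eq_E_cycleIcc hmn w hw1 hw2 hw3)
    (mapsTo_cycleIcc_symm hm hn) z
  rw [← hzx m le_rfl] at hnd
  refine ⟨fun i hi hiℓ => ?_, fun hnℓ => ?_⟩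
  · rw [hcoord ⟨hi, by omega⟩ ⟨by omega, hiℓ⟩]
    refine cycleIcc_gap_pos hq1 hd (fun j hj1 hjm => ?_) hzstep hmid hnext hnd htail hi hiℓ
    rw [hzx j hjm.le, hzx (j + 1) hjm]
    exact hx j hj1 hjm
  · rw [hcoord ⟨by omega, by omega⟩ ⟨by omega, hnℓ⟩]
    exact cycleIcc_gap_at_right hd hmid (hnext hnℓ) hnd

/-- Lemma for type `A_{ℓ-1}`. For `w = s_m s_{m+1} ⋯ s_{n-1}` and given
`x_1 > ⋯ > x_m > 0`, one can choose `x_{m+1} > ⋯ > x_{min(n+1,ℓ)} > 0` such that for every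
further choice `x_{n+2} > ⋯ > x_ℓ > 0` with `x_{n+1} > x_{n+2}`, one has
`⟨qx - wx, e_i - e_{i+1}⟩ > 0` for all `1 ≤ i ≤ ℓ-1`, and `⟨qx - wx, e_n - e_{n+1}⟩ > x_{n+1}`
if `n ≤ ℓ-1`. -/
theorem stmt_4 (ℓ : ℕ) (hℓ : 2 ≤ ℓ) (q : ℝ) (hq : 2 ≤ q)
    (m n : ℕ) (hm : 1 ≤ m) (hmn : m ≤ n) (hn : n ≤ ℓ)
    (w : EuclideanSpace ℝ (Fin ℓ) →ₗ[ℝ] EuclideanSpace ℝ (Fin ℓ))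
    (hw1 : ∀ j, m ≤ j → j + 1 ≤ n → w (E ℓ j) = E ℓ (j + 1))
    (hw2 : w (E ℓ n) = E ℓ m)
    (hw3 : ∀ j, 1 ≤ j → j ≤ ℓ → (j < m ∨ n < j) → w (E ℓ j) = E ℓ j)
    (x : ℕ → ℝ)
    (hx : ∀ j, 1 ≤ j → j < m → x (j + 1) < x j) (hxm : 0 < x m) :
    ∃ y : ℕ → ℝ,
      (∀ j, j ≤ m → y j = x j) ∧
      (∀ j, m ≤ j → j < min (n + 1) ℓ → y (j + 1) < y j) ∧
      0 < y (min (n + 1) ℓ) ∧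
      ∀ z : ℕ → ℝ,
        (∀ j, j ≤ min (n + 1) ℓ → z j = y j) →
        (∀ j, n + 1 ≤ j → j < ℓ → z (j + 1) < z j) →
        0 < z ℓ →
        (∀ i, 1 ≤ i → i + 1 ≤ ℓ →
          0 < ⟪q • vec ℓ z - w (vec ℓ z), E ℓ i - E ℓ (i + 1)⟫) ∧
        (n + 1 ≤ ℓ →
          z (n + 1) < ⟪q • vec ℓ z - w (vec ℓ z), E ℓ n - E ℓ (n + 1)⟫) :=
  stmt_4_general ℓ q hq m n hm hmn hn w hw1 hw2 hw3 x hx hxm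
end

section
/- Let ℓ ≥ 4 and let q ≥ 2 be a real number. Let λ = (λ_1,…,λ_k) be a composition of ℓ−1, set m_i = λ_1+⋯+λ_{i−1}+2 and n_i = λ_1+⋯+λ_i+1 (so the blocks [m_i, n_i] partition {2,…,ℓ}), and let ε = (ε_1,…,ε_k) ∈ {+1,−1}^k. Let w_{λ,ε} : ℝ^ℓ → ℝ^ℓ be the linear map determined by w_{λ,ε}(e_1) = (∏_{i=1}^k ε_i)·e_1, w_{λ,ε}(e_j) = e_{j+1} for m_i ≤ j ≤ n_i−1, and w_{λ,ε}(e_{n_i}) = ε_i·e_{m_i}, for each 1 ≤ i ≤ k. Let δ : ℝ^ℓ → ℝ^ℓ be one of: the identity; the map s_1 swapping e_1 and e_2 and fixing all other e_j; or the map t' with t'(e_1) = −e_2, t'(e_2) = −e_1, fixing all other e_j. Set w = δ ∘ w_{λ,ε}. Then there exists x = (x_1,…,x_ℓ) ∈ ℝ^ℓ with x_1 > x_2 > ⋯ > x_ℓ > 0 such that ⟨qx − wx, e_1 + e_2⟩ > 0 and ⟨qx − wx, e_i − e_{i+1}⟩ > 0 for all 1 ≤ i ≤ ℓ−1. -/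
/-!
Write `z = q x - w x`; the claim is that `z_1 + z_2 > 0` and that `z` is strictly decreasing.
Take `x_2 = 1` and let the coordinates shrink by `3/4` inside each block `[m_i, n_i]` and by
`3/16` when a new block starts. Inside a block `(w_{λ,ε} x)_j = x_{j-1} = 4/3 · x_j`, and
`3/4 > 1/q` keeps `z` decreasing there; at a block start the entry `ε_i x_{n_i}` has absolute
value at most `x_j`, and the extra factor `1/4` absorbs it. Only `z_1` and `z_2` feel `δ`, and
they are settled by the choice of `x_1`: a large `x_1 = 4` makes `z_1 > z_2`, except when `δ`
swaps `e_1, e_2` so that `z_2 = q - x_1`; then `z_2 > z_3` needs `x_1 ≤ 4/3`, and `x_1 = 5/4`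
still gives `z_1 > z_2`.
-/

open scoped RealInnerProductSpace

section Coordinates

variable {ℓ : ℕ}

lemma inner_E_succ (v : EuclideanSpace ℝ (Fin ℓ)) (i : Fin ℓ) : ⟪v, E ℓ (i + 1)⟫ = v i := by
  rw [E, dif_pos ⟨by omega, i.2⟩, EuclideanSpace.inner_single_right]
  simp

lemma ext_E {v w : EuclideanSpace ℝ (Fin ℓ)}
    (h : ∀ c, 1 ≤ c → c ≤ ℓ → ⟪v, E ℓ c⟫ = ⟪w, E ℓ c⟫) : v = w := by
  ext i
  rw [← inner_E_succ, ← inner_E_succ, h _ (by omega) i.2]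

lemma inner_vec_E_s9 (x : ℕ → ℝ) {c : ℕ} (hc1 : 1 ≤ c) (hcℓ : c ≤ ℓ) :
    ⟪vec ℓ x, E ℓ c⟫ = x c := by
  obtain ⟨i, rfl⟩ : ∃ i : Fin ℓ, c = i + 1 := ⟨⟨c - 1, by omega⟩, by simp; omega⟩
  rw [inner_E_succ]
  rfl

lemma inner_E_E_s9 (j : ℕ) {c : ℕ} (hc1 : 1 ≤ c) (hcℓ : c ≤ ℓ) :
    ⟪E ℓ j, E ℓ c⟫ = if j = c then 1 else 0 := by
  obtain ⟨i, rfl⟩ : ∃ i : Fin ℓ, c = i + 1 := ⟨⟨c - 1, by omega⟩, by simp; omega⟩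
  rw [inner_E_succ, E]
  split_ifs with hj hji hji <;> simp [Fin.ext_iff] <;> omega

lemma eq_sum_inner_E (v : EuclideanSpace ℝ (Fin ℓ)) :
    v = ∑ j ∈ Finset.Icc 1 ℓ, ⟪v, E ℓ j⟫ • E ℓ j := by
  refine ext_E fun c hc1 hcℓ => ?_
  simp_rw [sum_inner, real_inner_smul_left, inner_E_E_s9 _ hc1 hcℓ, mul_ite, mul_one, mul_zero,
    Finset.sum_ite_eq', Finset.mem_Icc, if_pos (And.intro hc1 hcℓ)]

lemma map_eq_self_of_map_E {f : EuclideanSpace ℝ (Fin ℓ) →ₗ[ℝ] EuclideanSpace ℝ (Fin ℓ)}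
    (hf : ∀ j, 1 ≤ j → j ≤ ℓ → f (E ℓ j) = E ℓ j) (v : EuclideanSpace ℝ (Fin ℓ)) : f v = v := by
  conv_lhs => rw [eq_sum_inner_E v]
  conv_rhs => rw [eq_sum_inner_E v]
  rw [map_sum]
  refine Finset.sum_congr rfl fun j hj => ?_
  rw [Finset.mem_Icc] at hj
  rw [map_smul, hf j hj.1 hj.2]

lemma inner_map_E_eq (f : EuclideanSpace ℝ (Fin ℓ) →ₗ[ℝ] EuclideanSpace ℝ (Fin ℓ)) {p c : ℕ}
    (hp1 : 1 ≤ p) (hpℓ : p ≤ ℓ)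
    (h : ∀ j, 1 ≤ j → j ≤ ℓ → j ≠ p → ⟪f (E ℓ j), E ℓ c⟫ = 0) (v : EuclideanSpace ℝ (Fin ℓ)) :
    ⟪f v, E ℓ c⟫ = ⟪v, E ℓ p⟫ * ⟪f (E ℓ p), E ℓ c⟫ := by
  conv_lhs => rw [eq_sum_inner_E v]
  rw [map_sum, sum_inner, Finset.sum_eq_single p]
  · rw [map_smul, real_inner_smul_left]
  · intro j hj hjp
    rw [Finset.mem_Icc] at hj
    rw [map_smul, real_inner_smul_left, h j hj.1 hj.2 hjp, mul_zero]
  · intro hp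
    exact absurd (Finset.mem_Icc.mpr ⟨hp1, hpℓ⟩) hp

lemma inner_smul_E_E (a : ℝ) (j : ℕ) {ℓ c : ℕ} (hc1 : 1 ≤ c) (hcℓ : c ≤ ℓ) :
    ⟪a • E ℓ j, E ℓ c⟫ = if j = c then a else 0 := by
  rw [real_inner_smul_left, inner_E_E_s9 j hc1 hcℓ, mul_ite, mul_one, mul_zero]

lemma inner_map_E_of_swap {δ : EuclideanSpace ℝ (Fin ℓ) →ₗ[ℝ] EuclideanSpace ℝ (Fin ℓ)} {u : ℝ}
    (hδ1 : δ (E ℓ 1) = u • E ℓ 2) (hδ2 : δ (E ℓ 2) = u • E ℓ 1)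
    (hδ3 : ∀ j, 3 ≤ j → j ≤ ℓ → δ (E ℓ j) = E ℓ j) (hℓ : 2 ≤ ℓ) (v : EuclideanSpace ℝ (Fin ℓ))
    {c : ℕ} (hc : 1 ≤ c) (hcℓ : c ≤ ℓ) :
    ⟪δ v, E ℓ c⟫ = ⟪v, E ℓ (Equiv.swap 1 2 c)⟫ * ⟪δ (E ℓ (Equiv.swap 1 2 c)), E ℓ c⟫ := by
  refine inner_map_E_eq δ ?_ ?_ (fun j hj hjℓ hjc => ?_) v
  · rw [Equiv.swap_apply_def]; split_ifs <;> omega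
  · rw [Equiv.swap_apply_def]; split_ifs <;> omega
  rw [Equiv.swap_apply_def] at hjc
  rcases (show j = 1 ∨ j = 2 ∨ 3 ≤ j by omega) with rfl | rfl | hj3
  · rw [hδ1, inner_smul_E_E _ _ hc hcℓ, if_neg (by split_ifs at hjc <;> omega)]
  · rw [hδ2, inner_smul_E_E _ _ hc hcℓ, if_neg (by split_ifs at hjc <;> omega)]
  · rw [hδ3 j hj3 hjℓ, inner_E_E_s9 _ hc hcℓ, if_neg (by split_ifs at hjc <;> omega)]

end Coordinates

section Blocks

variable {lam : ℕ → ℕ} {i i' j k : ℕ}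

def blockStart (lam : ℕ → ℕ) (i : ℕ) : ℕ := ∑ t ∈ Finset.Icc 1 (i - 1), lam t + 2

def blockEnd (lam : ℕ → ℕ) (i : ℕ) : ℕ := ∑ t ∈ Finset.Icc 1 i, lam t + 1

def blockStarts (lam : ℕ → ℕ) (k : ℕ) : Finset ℕ := (Finset.Icc 1 k).image (blockStart lam)

lemma blockStart_succ : blockStart lam (i + 1) = blockEnd lam i + 1 := rfl

lemma two_le_blockStart : 2 ≤ blockStart lam i := Nat.le_add_left 2 _

lemma blockEnd_zero : blockEnd lam 0 = 1 := rfl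

lemma blockEnd_mono : Monotone (blockEnd lam) := fun _ _ h =>
  Nat.add_le_add_right (Finset.sum_le_sum_of_subset (Finset.Icc_subset_Icc_right h)) 1

lemma blockStart_le_blockEnd (hi : 1 ≤ i) (hlam : 1 ≤ lam i) :
    blockStart lam i ≤ blockEnd lam i := by
  obtain ⟨i, rfl⟩ : ∃ i', i = i' + 1 := ⟨i - 1, by omega⟩
  rw [blockStart_succ, blockEnd, blockEnd, Finset.sum_Icc_succ_top (by omega)]
  omega

lemma exists_block (hj : 2 ≤ j) (hjk : j ≤ blockEnd lam k) :
    ∃ i ∈ Finset.Icc 1 k, blockStart lam i ≤ j ∧ j ≤ blockEnd lam i := by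
  classical
  have hex : ∃ i, j ≤ blockEnd lam i := ⟨k, hjk⟩
  have hpos : Nat.find hex ≠ 0 := fun h0 => by
    have := Nat.find_spec hex
    rw [h0, blockEnd_zero] at this
    omega
  obtain ⟨i, hi⟩ : ∃ i, Nat.find hex = i + 1 := ⟨Nat.find hex - 1, by omega⟩
  have hprev : ¬ j ≤ blockEnd lam i := Nat.find_min hex (by omega)
  refine ⟨i + 1, Finset.mem_Icc.mpr ⟨by omega, hi ▸ Nat.find_min' hex hjk⟩, ?_,
    hi ▸ Nat.find_spec hex⟩
  rw [blockStart_succ]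
  omega

lemma block_unique (hi : 1 ≤ i) (hi' : 1 ≤ i') (hsj : blockStart lam i ≤ j)
    (hje : j ≤ blockEnd lam i) (hsj' : blockStart lam i' ≤ j) (hje' : j ≤ blockEnd lam i') :
    i = i' := by
  have key : ∀ {a b : ℕ}, 1 ≤ b → a < b → j ≤ blockEnd lam a → blockStart lam b ≤ j → False :=
    fun {a b} hb hab ha hb' => by
      obtain ⟨b, rfl⟩ : ∃ b', b = b' + 1 := ⟨b - 1, by omega⟩
      rw [blockStart_succ] at hb'
      have := blockEnd_mono (lam := lam) (show a ≤ b by omega)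
      omega
  rcases lt_trichotomy i i' with h | h | h
  · exact (key hi' h hje hsj').elim
  · exact h
  · exact (key hi h hje' hsj).elim

end Blocks

lemma sub_lt_sub_of_descent {q a a' b b' : ℝ} (hq : 2 ≤ q) (ha : 0 < a) (hb : b ≤ 4 / 3 * a)
    (h : (a' = 3 / 16 * a ∧ -a' ≤ b') ∨ (a' = 3 / 4 * a ∧ b' = a)) :
    q * a' - b' < q * a - b := by
  rcases h with ⟨rfl, h⟩ | ⟨rfl, rfl⟩ <;> nlinarith

section Witness

variable {lam : ℕ → ℕ} {k : ℕ} {κ : ℝ} {a b c : ℕ}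

noncomputable def witness (lam : ℕ → ℕ) (k : ℕ) (κ : ℝ) (c : ℕ) : ℝ :=
  if c = 1 then κ else ∏ j ∈ Finset.Ioc 2 c, if j ∈ blockStarts lam k then 3 / 16 else 3 / 4

lemma witness_one : witness lam k κ 1 = κ := if_pos rfl

lemma witness_two : witness lam k κ 2 = 1 := by simp [witness]

lemma witness_succ (hc : 2 ≤ c) :
    witness lam k κ (c + 1) =
      (if c + 1 ∈ blockStarts lam k then 3 / 16 else 3 / 4) * witness lam k κ c := by
  simp only [witness, if_neg (show c + 1 ≠ 1 by omega), if_neg (show c ≠ 1 by omega)]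
  rw [Finset.prod_Ioc_succ_top hc, mul_comm]

lemma witness_pos (hc : 2 ≤ c) : 0 < witness lam k κ c := by
  rw [witness, if_neg (by omega)]
  exact Finset.prod_pos fun j _ => by split_ifs <;> norm_num

lemma witness_succ_lt (hc : 2 ≤ c) : witness lam k κ (c + 1) < witness lam k κ c := by
  rw [witness_succ hc]
  have := witness_pos (lam := lam) (k := k) (κ := κ) hc
  split_ifs <;> linarith

lemma witness_le_of_le (ha : 2 ≤ a) (hab : a ≤ b) : witness lam k κ b ≤ witness lam k κ a :=
  antitoneOn_nat_Ici_of_succ_le (fun _ hn => (witness_succ_lt hn).le) ha (ha.trans hab) hab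

end Witness

def IsChamberWitness (ℓ : ℕ) (q : ℝ)
    (f : EuclideanSpace ℝ (Fin ℓ) →ₗ[ℝ] EuclideanSpace ℝ (Fin ℓ)) (x : ℕ → ℝ) : Prop :=
  (∀ j, 1 ≤ j → j < ℓ → x (j + 1) < x j) ∧ 0 < x ℓ ∧
    0 < ⟪q • vec ℓ x - f (vec ℓ x), E ℓ 1 + E ℓ 2⟫ ∧
    ∀ i, 1 ≤ i → i + 1 ≤ ℓ → 0 < ⟪q • vec ℓ x - f (vec ℓ x), E ℓ i - E ℓ (i + 1)⟫

/-- The paper's `w_{λ,ε}`; its blocks `[m_i, n_i]` are `[blockStart lam i, blockEnd lam i]`. -/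
structure IsSignedBlockCycle (ℓ k : ℕ) (lam : ℕ → ℕ) (eps : ℕ → ℝ)
    (w : EuclideanSpace ℝ (Fin ℓ) →ₗ[ℝ] EuclideanSpace ℝ (Fin ℓ)) : Prop where
  one_le_lam : ∀ i, 1 ≤ i → i ≤ k → 1 ≤ lam i
  blockEnd_eq : blockEnd lam k = ℓ
  eps_eq : ∀ i, 1 ≤ i → i ≤ k → eps i = 1 ∨ eps i = -1
  map_E_one : w (E ℓ 1) = (∏ i ∈ Finset.Icc 1 k, eps i) • E ℓ 1
  map_E_block : ∀ i, 1 ≤ i → i ≤ k →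
    (∀ j, blockStart lam i ≤ j → j + 1 ≤ blockEnd lam i → w (E ℓ j) = E ℓ (j + 1)) ∧
      w (E ℓ (blockEnd lam i)) = eps i • E ℓ (blockStart lam i)

namespace IsSignedBlockCycle

variable {ℓ k : ℕ} {lam : ℕ → ℕ} {eps : ℕ → ℝ}
  {w : EuclideanSpace ℝ (Fin ℓ) →ₗ[ℝ] EuclideanSpace ℝ (Fin ℓ)} {q κ : ℝ} {c : ℕ}

lemma prod_eps (hw : IsSignedBlockCycle ℓ k lam eps w) :
    ∏ i ∈ Finset.Icc 1 k, eps i = 1 ∨ ∏ i ∈ Finset.Icc 1 k, eps i = -1 := by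
  refine Finset.prod_induction eps (fun a => a = 1 ∨ a = -1) ?_ (Or.inl rfl) fun i hi => ?_
  · rintro a b (rfl | rfl) (rfl | rfl) <;> norm_num
  · rw [Finset.mem_Icc] at hi
    exact hw.eps_eq i hi.1 hi.2

lemma blockEnd_le (hw : IsSignedBlockCycle ℓ k lam eps w) {i : ℕ} (hik : i ≤ k) :
    blockEnd lam i ≤ ℓ :=
  hw.blockEnd_eq ▸ blockEnd_mono hik

lemma two_mem_blockStarts (hw : IsSignedBlockCycle ℓ k lam eps w) (hℓ : 2 ≤ ℓ) :
    2 ∈ blockStarts lam k := by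
  obtain ⟨i, hi, hs, -⟩ := exists_block (lam := lam) le_rfl (hw.blockEnd_eq ▸ hℓ)
  have hs2 : 2 ≤ blockStart lam i := two_le_blockStart
  exact Finset.mem_image.mpr ⟨i, hi, by omega⟩

lemma map_E_cases (hw : IsSignedBlockCycle ℓ k lam eps w) {j : ℕ} (hj : 2 ≤ j) (hjℓ : j ≤ ℓ) :
    (∃ i ∈ Finset.Icc 1 k, j = blockEnd lam i ∧ w (E ℓ j) = eps i • E ℓ (blockStart lam i)) ∨
      ((∀ i ∈ Finset.Icc 1 k, j ≠ blockEnd lam i) ∧ w (E ℓ j) = E ℓ (j + 1)) := by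
  obtain ⟨i, hi, hsj, hje⟩ := exists_block hj (hw.blockEnd_eq ▸ hjℓ)
  rw [Finset.mem_Icc] at hi
  rcases eq_or_lt_of_le hje with rfl | hlt
  · exact Or.inl ⟨i, Finset.mem_Icc.mpr hi, rfl, (hw.map_E_block i hi.1 hi.2).2⟩
  refine Or.inr ⟨fun i' hi' hji' => ?_, (hw.map_E_block i hi.1 hi.2).1 j hsj hlt⟩
  rw [Finset.mem_Icc] at hi'
  have hs' := blockStart_le_blockEnd hi'.1 (hw.one_le_lam i' hi'.1 hi'.2)
  have := block_unique hi.1 hi'.1 hsj hje (hji' ▸ hs') hji'.le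
  subst this
  omega

lemma three_le_of_not_mem_blockStarts (hw : IsSignedBlockCycle ℓ k lam eps w)
    (hc : 2 ≤ c) (hcℓ : c ≤ ℓ) (hcs : c ∉ blockStarts lam k) : 3 ≤ c := by
  by_contra h
  exact hcs (show c = 2 by omega ▸ hw.two_mem_blockStarts (by omega))

lemma inner_map_E_one (hw : IsSignedBlockCycle ℓ k lam eps w) (hℓ : 1 ≤ ℓ)
    (v : EuclideanSpace ℝ (Fin ℓ)) :
    ⟪w v, E ℓ 1⟫ = ⟪v, E ℓ 1⟫ * ∏ i ∈ Finset.Icc 1 k, eps i := by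
  rw [inner_map_E_eq w le_rfl hℓ _ v, hw.map_E_one, inner_smul_E_E _ _ le_rfl hℓ, if_pos rfl]
  intro j hj hjℓ hj1
  rcases hw.map_E_cases (by omega) hjℓ with ⟨i, -, -, hwj⟩ | ⟨-, hwj⟩
  · rw [hwj, inner_smul_E_E _ _ le_rfl hℓ, if_neg (two_le_blockStart.trans_lt' one_lt_two).ne']
  · rw [hwj, inner_E_E_s9 _ le_rfl hℓ, if_neg (by omega)]

lemma inner_map_E_blockStart (hw : IsSignedBlockCycle ℓ k lam eps w) {i : ℕ} (hi : 1 ≤ i)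
    (hik : i ≤ k) (v : EuclideanSpace ℝ (Fin ℓ)) :
    ⟪w v, E ℓ (blockStart lam i)⟫ = ⟪v, E ℓ (blockEnd lam i)⟫ * eps i := by
  have hse := blockStart_le_blockEnd hi (hw.one_le_lam i hi hik)
  have hs2 : 2 ≤ blockStart lam i := two_le_blockStart
  have hsℓ : blockStart lam i ≤ ℓ := hse.trans (hw.blockEnd_le hik)
  rw [inner_map_E_eq w (by omega) (hw.blockEnd_le hik) _ v, (hw.map_E_block i hi hik).2,
    inner_smul_E_E _ _ (by omega) hsℓ, if_pos rfl]
  intro j hj hjℓ hjn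
  rcases Nat.lt_or_ge j 2 with hj2 | hj2
  · rw [show j = 1 by omega, hw.map_E_one, inner_smul_E_E _ _ (by omega) hsℓ, if_neg (by omega)]
  rcases hw.map_E_cases hj2 hjℓ with ⟨i', hi', rfl, hwj⟩ | ⟨hnot, hwj⟩
  · rw [Finset.mem_Icc] at hi'
    have hse' := blockStart_le_blockEnd hi'.1 (hw.one_le_lam i' hi'.1 hi'.2)
    rw [hwj, inner_smul_E_E _ _ (by omega) hsℓ, if_neg]
    intro hss
    exact hjn (by rw [block_unique hi'.1 hi le_rfl hse' hss.ge (hss ▸ hse)])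
  · rw [hwj, inner_E_E_s9 _ (by omega) hsℓ, if_neg]
    intro hjs
    obtain ⟨i, rfl⟩ : ∃ i', i = i' + 1 := ⟨i - 1, by omega⟩
    have hi1 : 1 ≤ i := by
      by_contra h0
      rw [show i = 0 by omega, blockStart_succ, blockEnd_zero] at hjs
      omega
    rw [blockStart_succ] at hjs
    exact hnot i (Finset.mem_Icc.mpr ⟨hi1, by omega⟩) (by omega)

lemma inner_map_E_of_not_mem_blockStarts (hw : IsSignedBlockCycle ℓ k lam eps w)
    (hc : 2 ≤ c) (hcℓ : c ≤ ℓ) (hcs : c ∉ blockStarts lam k) (v : EuclideanSpace ℝ (Fin ℓ)) :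
    ⟪w v, E ℓ c⟫ = ⟪v, E ℓ (c - 1)⟫ := by
  have hc3 := hw.three_le_of_not_mem_blockStarts hc hcℓ hcs
  have hstart : ∀ i, 1 ≤ i → i ≤ k → blockStart lam i ≠ c := fun i hi hik hic =>
    hcs (Finset.mem_image.mpr ⟨i, Finset.mem_Icc.mpr ⟨hi, hik⟩, hic⟩)
  rw [inner_map_E_eq w (p := c - 1) (by omega) (by omega) _ v]
  · rcases hw.map_E_cases (j := c - 1) (by omega) (by omega) with ⟨i, hi, hci, -⟩ | ⟨-, hwp⟩
    · rw [Finset.mem_Icc] at hi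
      have hik : i < k := by
        by_contra h
        have := blockEnd_mono (lam := lam) (show k ≤ i by omega)
        rw [hw.blockEnd_eq] at this
        omega
      exact (hstart (i + 1) (by omega) hik (by rw [blockStart_succ]; omega)).elim
    · rw [hwp, Nat.sub_add_cancel (by omega), inner_E_E_s9 _ (by omega) hcℓ, if_pos rfl, mul_one]
  intro j hj hjℓ hjp
  rcases Nat.lt_or_ge j 2 with hj2 | hj2
  · rw [show j = 1 by omega, hw.map_E_one, inner_smul_E_E _ _ (by omega) hcℓ, if_neg (by omega)]
  rcases hw.map_E_cases hj2 hjℓ with ⟨i, hi, -, hwj⟩ | ⟨-, hwj⟩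
  · rw [Finset.mem_Icc] at hi
    rw [hwj, inner_smul_E_E _ _ (by omega) hcℓ, if_neg (hstart i hi.1 hi.2)]
  · rw [hwj, inner_E_E_s9 _ (by omega) hcℓ, if_neg (by omega)]

lemma abs_inner_map_witness_le (hw : IsSignedBlockCycle ℓ k lam eps w)
    (hc : c ∈ blockStarts lam k) :
    |⟪w (vec ℓ (witness lam k κ)), E ℓ c⟫| ≤ witness lam k κ c := by
  obtain ⟨i, hi, rfl⟩ := Finset.mem_image.mp hc
  rw [Finset.mem_Icc] at hi
  have hse := blockStart_le_blockEnd hi.1 (hw.one_le_lam i hi.1 hi.2)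
  have hs2 : 2 ≤ blockStart lam i := two_le_blockStart
  have heps : |eps i| = 1 := by rcases hw.eps_eq i hi.1 hi.2 with h | h <;> simp [h]
  rw [hw.inner_map_E_blockStart hi.1 hi.2, inner_vec_E_s9 _ (by omega) (hw.blockEnd_le hi.2),
    abs_mul, heps, mul_one, abs_of_pos (witness_pos (by omega))]
  exact witness_le_of_le hs2 hse

lemma abs_inner_map_witness_two_le (hw : IsSignedBlockCycle ℓ k lam eps w) (hℓ : 2 ≤ ℓ) :
    |⟪w (vec ℓ (witness lam k κ)), E ℓ 2⟫| ≤ 1 :=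
  witness_two (lam := lam) (k := k) (κ := κ) ▸
    hw.abs_inner_map_witness_le (hw.two_mem_blockStarts hℓ)

lemma inner_map_witness_of_not_mem (hw : IsSignedBlockCycle ℓ k lam eps w) (hc : 2 ≤ c)
    (hcℓ : c ≤ ℓ) (hcs : c ∉ blockStarts lam k) :
    ⟪w (vec ℓ (witness lam k κ)), E ℓ c⟫ = 4 / 3 * witness lam k κ c := by
  obtain ⟨d, rfl⟩ : ∃ d, c = d + 1 := ⟨c - 1, by omega⟩
  have hd := hw.three_le_of_not_mem_blockStarts hc hcℓ hcs
  rw [hw.inner_map_E_of_not_mem_blockStarts hc hcℓ hcs, Nat.add_sub_cancel,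
    inner_vec_E_s9 _ (by omega) (by omega), witness_succ (by omega), if_neg hcs]
  ring

lemma inner_map_witness_le (hw : IsSignedBlockCycle ℓ k lam eps w) (hc : 2 ≤ c) (hcℓ : c ≤ ℓ) :
    ⟪w (vec ℓ (witness lam k κ)), E ℓ c⟫ ≤ 4 / 3 * witness lam k κ c := by
  have hpos := witness_pos (lam := lam) (k := k) (κ := κ) hc
  by_cases hcs : c ∈ blockStarts lam k
  · linarith [le_abs_self ⟪w (vec ℓ (witness lam k κ)), E ℓ c⟫,
      hw.abs_inner_map_witness_le (κ := κ) hcs]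
  · exact (hw.inner_map_witness_of_not_mem hc hcℓ hcs).le

lemma witness_descent (hw : IsSignedBlockCycle ℓ k lam eps w) {b : ℝ} (hq : 2 ≤ q)
    (hc : 2 ≤ c) (hcℓ : c + 1 ≤ ℓ) (hb : b ≤ 4 / 3 * witness lam k κ c) :
    q * witness lam k κ (c + 1) - ⟪w (vec ℓ (witness lam k κ)), E ℓ (c + 1)⟫ <
      q * witness lam k κ c - b := by
  refine sub_lt_sub_of_descent hq (witness_pos hc) hb ?_
  have hsucc := witness_succ (lam := lam) (k := k) (κ := κ) hc
  by_cases hcs : c + 1 ∈ blockStarts lam k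
  · rw [if_pos hcs] at hsucc
    exact Or.inl ⟨hsucc, neg_le_of_abs_le (hw.abs_inner_map_witness_le hcs)⟩
  · rw [if_neg hcs] at hsucc
    refine Or.inr ⟨hsucc, ?_⟩
    rw [hw.inner_map_witness_of_not_mem (by omega) hcℓ hcs, hsucc]
    ring

theorem isChamberWitness_witness (hw : IsSignedBlockCycle ℓ k lam eps w) (hℓ : 2 ≤ ℓ)
    (hq : 2 ≤ q) (hκ : 1 < κ) (δ : EuclideanSpace ℝ (Fin ℓ) →ₗ[ℝ] EuclideanSpace ℝ (Fin ℓ))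
    {a b : ℝ} (ha : ⟪δ (w (vec ℓ (witness lam k κ))), E ℓ 1⟫ = a)
    (hb : ⟪δ (w (vec ℓ (witness lam k κ))), E ℓ 2⟫ = b)
    (hδ : ∀ c, 3 ≤ c → c ≤ ℓ →
      ⟪δ (w (vec ℓ (witness lam k κ))), E ℓ c⟫ = ⟪w (vec ℓ (witness lam k κ)), E ℓ c⟫)
    (hb43 : b ≤ 4 / 3) (h12 : q - b < q * κ - a) :
    IsChamberWitness ℓ q (δ ∘ₗ w) (witness lam k κ) := by
  set x := witness lam k κ
  have hz : ∀ c, 1 ≤ c → c ≤ ℓ →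
      ⟪q • vec ℓ x - (δ ∘ₗ w) (vec ℓ x), E ℓ c⟫ = q * x c - ⟪δ (w (vec ℓ x)), E ℓ c⟫ :=
    fun c hc hcℓ => by
      rw [inner_sub_left, real_inner_smul_left, inner_vec_E_s9 _ hc hcℓ, LinearMap.comp_apply]
  have hx1 : x 1 = κ := witness_one
  have hx2 : x 2 = 1 := witness_two
  refine ⟨fun j hj hjℓ => ?_, witness_pos (by omega), ?_, fun i hi hiℓ => ?_⟩
  · rcases eq_or_lt_of_le hj with rfl | hj
    · rwa [hx1, hx2]
    · exact witness_succ_lt hj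
  · rw [inner_add_right, hz 1 le_rfl (by omega), hz 2 (by omega) hℓ, ha, hb, hx1, hx2]
    linarith
  rw [inner_sub_right, hz i hi (by omega), hz (i + 1) (by omega) hiℓ]
  rcases (show i = 1 ∨ i = 2 ∨ 3 ≤ i by omega) with rfl | rfl | hi3
  · rw [ha, hb, hx1, hx2]
    linarith
  · rw [hb, hδ 3 le_rfl hiℓ]
    have := hw.witness_descent (κ := κ) (b := b) hq le_rfl hiℓ (by rwa [witness_two, mul_one])
    linarith
  · rw [hδ i hi3 (by omega), hδ (i + 1) (by omega) hiℓ]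
    have := hw.witness_descent (κ := κ) hq (by omega) hiℓ
      (hw.inner_map_witness_le (by omega) (by omega))
    linarith

theorem exists_isChamberWitness_of_map_E_eq_self (hw : IsSignedBlockCycle ℓ k lam eps w)
    (hℓ : 2 ≤ ℓ) (hq : 2 ≤ q) (δ : EuclideanSpace ℝ (Fin ℓ) →ₗ[ℝ] EuclideanSpace ℝ (Fin ℓ))
    (hδ : ∀ j, 1 ≤ j → j ≤ ℓ → δ (E ℓ j) = E ℓ j) :
    ∃ x, IsChamberWitness ℓ q (δ ∘ₗ w) x := by
  have hδv := map_eq_self_of_map_E hδ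
  have hy2 := abs_le.mp (hw.abs_inner_map_witness_two_le (κ := 4) hℓ)
  have hP : ∏ i ∈ Finset.Icc 1 k, eps i ≤ 1 := by rcases hw.prod_eps with h | h <;> linarith
  refine ⟨_, hw.isChamberWitness_witness (κ := 4) hℓ hq (by norm_num) δ
    (by rw [hδv, hw.inner_map_E_one (by omega), inner_vec_E_s9 _ le_rfl (by omega), witness_one])
    (by rw [hδv]) (fun c _ _ => by rw [hδv]) (by linarith [hy2.2]) (by linarith [hy2.2])⟩

theorem exists_isChamberWitness_of_swap (hw : IsSignedBlockCycle ℓ k lam eps w) (hℓ : 2 ≤ ℓ)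
    (hq : 2 ≤ q) (δ : EuclideanSpace ℝ (Fin ℓ) →ₗ[ℝ] EuclideanSpace ℝ (Fin ℓ)) {u : ℝ}
    (hu : u = 1 ∨ u = -1) (hδ1 : δ (E ℓ 1) = u • E ℓ 2) (hδ2 : δ (E ℓ 2) = u • E ℓ 1)
    (hδ3 : ∀ j, 3 ≤ j → j ≤ ℓ → δ (E ℓ j) = E ℓ j) :
    ∃ x, IsChamberWitness ℓ q (δ ∘ₗ w) x := by
  set P := ∏ i ∈ Finset.Icc 1 k, eps i
  have hswap := inner_map_E_of_swap hδ1 hδ2 hδ3 hℓ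
  have key : ∀ κ, 1 < κ → κ * (u * P) ≤ 4 / 3 → q - κ * (u * P) + 1 < q * κ →
      IsChamberWitness ℓ q (δ ∘ₗ w) (witness lam k κ) := fun κ hκ hb h12 => by
    have hy2 := abs_le.mp (hw.abs_inner_map_witness_two_le (κ := κ) hℓ)
    have hy2u : ⟪w (vec ℓ (witness lam k κ)), E ℓ 2⟫ * u ≤ 1 := by
      rcases hu with rfl | rfl <;> linarith
    refine hw.isChamberWitness_witness hℓ hq hκ δ (a := ⟪w (vec ℓ (witness lam k κ)), E ℓ 2⟫ * u)
      ?_ ?_ (fun c hc hcℓ => ?_) hb (by linarith)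
    · rw [hswap _ le_rfl (by omega), Equiv.swap_apply_left, hδ2,
        inner_smul_E_E _ _ le_rfl (by omega), if_pos rfl]
    · rw [hswap _ (by omega) hℓ, Equiv.swap_apply_right, hδ1, inner_smul_E_E _ _ (by omega) hℓ,
        if_pos rfl, hw.inner_map_E_one (by omega), inner_vec_E_s9 _ le_rfl (by omega), witness_one]
      ring
    · rw [hswap _ (by omega) hcℓ, Equiv.swap_apply_of_ne_of_ne (by omega) (by omega),
        hδ3 c hc hcℓ, inner_E_E_s9 _ (by omega) hcℓ, if_pos rfl, mul_one]
  have hσ : u * P = 1 ∨ u * P = -1 := by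
    rcases hu with rfl | rfl <;> rcases hw.prod_eps with h | h <;> simp [P, h]
  rcases hσ with hσ | hσ
  · exact ⟨_, key (5 / 4) (by norm_num) (by rw [hσ]; norm_num) (by rw [hσ]; linarith)⟩
  · exact ⟨_, key 4 (by norm_num) (by rw [hσ]; norm_num) (by rw [hσ]; linarith)⟩

end IsSignedBlockCycle

theorem stmt_9_general (ℓ : ℕ) (hℓ : 4 ≤ ℓ) (q : ℝ) (hq : 2 ≤ q)
    (k : ℕ) (lam : ℕ → ℕ)
    (hlam : ∀ i, 1 ≤ i → i ≤ k → 1 ≤ lam i)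
    (hsum : ∑ j ∈ Finset.Icc 1 k, lam j = ℓ - 1)
    (eps : ℕ → ℝ) (heps : ∀ i, 1 ≤ i → i ≤ k → eps i = 1 ∨ eps i = -1)
    (wle : EuclideanSpace ℝ (Fin ℓ) →ₗ[ℝ] EuclideanSpace ℝ (Fin ℓ))
    (hwle1 : wle (E ℓ 1) = (∏ i ∈ Finset.Icc 1 k, eps i) • E ℓ 1)
    (hwle : ∀ i, 1 ≤ i → i ≤ k →
      (∀ j, (∑ t ∈ Finset.Icc 1 (i - 1), lam t) + 2 ≤ j →
          j + 1 ≤ (∑ t ∈ Finset.Icc 1 i, lam t) + 1 → wle (E ℓ j) = E ℓ (j + 1)) ∧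
      wle (E ℓ ((∑ t ∈ Finset.Icc 1 i, lam t) + 1))
        = eps i • E ℓ ((∑ t ∈ Finset.Icc 1 (i - 1), lam t) + 2))
    (δ : EuclideanSpace ℝ (Fin ℓ) →ₗ[ℝ] EuclideanSpace ℝ (Fin ℓ))
    (hδ : (∀ j, 1 ≤ j → j ≤ ℓ → δ (E ℓ j) = E ℓ j) ∨
      (δ (E ℓ 1) = E ℓ 2 ∧ δ (E ℓ 2) = E ℓ 1 ∧
        ∀ j, 3 ≤ j → j ≤ ℓ → δ (E ℓ j) = E ℓ j) ∨
      (δ (E ℓ 1) = -E ℓ 2 ∧ δ (E ℓ 2) = -E ℓ 1 ∧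
        ∀ j, 3 ≤ j → j ≤ ℓ → δ (E ℓ j) = E ℓ j)) :
    ∃ x : ℕ → ℝ,
      (∀ j, 1 ≤ j → j < ℓ → x (j + 1) < x j) ∧ 0 < x ℓ ∧
      0 < ⟪q • vec ℓ x - δ (wle (vec ℓ x)), E ℓ 1 + E ℓ 2⟫ ∧
      (∀ i, 1 ≤ i → i + 1 ≤ ℓ →
        0 < ⟪q • vec ℓ x - δ (wle (vec ℓ x)), E ℓ i - E ℓ (i + 1)⟫) := by
  have hℓ2 : 2 ≤ ℓ := by omega
  have hw : IsSignedBlockCycle ℓ k lam eps wle :=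
    ⟨hlam, show ∑ j ∈ Finset.Icc 1 k, lam j + 1 = ℓ by omega, heps, hwle1, hwle⟩
  rcases hδ with hid | ⟨h1, h2, h3⟩ | ⟨h1, h2, h3⟩
  · exact hw.exists_isChamberWitness_of_map_E_eq_self hℓ2 hq δ hid
  · exact hw.exists_isChamberWitness_of_swap hℓ2 hq δ (Or.inl rfl) (by rw [h1, one_smul])
      (by rw [h2, one_smul]) h3
  · exact hw.exists_isChamberWitness_of_swap hℓ2 hq δ (Or.inr rfl) (by rw [h1, neg_one_smul])
      (by rw [h2, neg_one_smul]) h3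

/-- type `D_ℓ`. For a composition `λ` of `ℓ-1`, signs `ε_i ∈ {±1}`, the
even-signed block-cycle element `w_{λ,ε}` (on the blocks `[m_i, n_i]` partitioning `{2,…,ℓ}`,
with `w_{λ,ε}(e_1) = (∏_i ε_i)·e_1`), and `δ ∈ {id, s_1, t'}`, setting `w = δ ∘ w_{λ,ε}`,
there exists `x_1 > ⋯ > x_ℓ > 0` with `⟨qx - wx, e_1 + e_2⟩ > 0` and
`⟨qx - wx, e_i - e_{i+1}⟩ > 0` for all `1 ≤ i ≤ ℓ-1`. -/
theorem stmt_9 (ℓ : ℕ) (hℓ : 4 ≤ ℓ) (q : ℝ) (hq : 2 ≤ q)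
    (k : ℕ) (hk : 1 ≤ k) (lam : ℕ → ℕ)
    (hlam : ∀ i, 1 ≤ i → i ≤ k → 1 ≤ lam i)
    (hsum : ∑ j ∈ Finset.Icc 1 k, lam j = ℓ - 1)
    (eps : ℕ → ℝ) (heps : ∀ i, 1 ≤ i → i ≤ k → eps i = 1 ∨ eps i = -1)
    (wle : EuclideanSpace ℝ (Fin ℓ) →ₗ[ℝ] EuclideanSpace ℝ (Fin ℓ))
    (hwle1 : wle (E ℓ 1) = (∏ i ∈ Finset.Icc 1 k, eps i) • E ℓ 1)
    (hwle : ∀ i, 1 ≤ i → i ≤ k →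
      (∀ j, (∑ t ∈ Finset.Icc 1 (i - 1), lam t) + 2 ≤ j →
          j + 1 ≤ (∑ t ∈ Finset.Icc 1 i, lam t) + 1 → wle (E ℓ j) = E ℓ (j + 1)) ∧
      wle (E ℓ ((∑ t ∈ Finset.Icc 1 i, lam t) + 1))
        = eps i • E ℓ ((∑ t ∈ Finset.Icc 1 (i - 1), lam t) + 2))
    (δ : EuclideanSpace ℝ (Fin ℓ) →ₗ[ℝ] EuclideanSpace ℝ (Fin ℓ))
    (hδ : (∀ j, 1 ≤ j → j ≤ ℓ → δ (E ℓ j) = E ℓ j) ∨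
      (δ (E ℓ 1) = E ℓ 2 ∧ δ (E ℓ 2) = E ℓ 1 ∧
        ∀ j, 3 ≤ j → j ≤ ℓ → δ (E ℓ j) = E ℓ j) ∨
      (δ (E ℓ 1) = -E ℓ 2 ∧ δ (E ℓ 2) = -E ℓ 1 ∧
        ∀ j, 3 ≤ j → j ≤ ℓ → δ (E ℓ j) = E ℓ j)) :
    ∃ x : ℕ → ℝ,
      (∀ j, 1 ≤ j → j < ℓ → x (j + 1) < x j) ∧ 0 < x ℓ ∧
      0 < ⟪q • vec ℓ x - δ (wle (vec ℓ x)), E ℓ 1 + E ℓ 2⟫ ∧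
      (∀ i, 1 ≤ i → i + 1 ≤ ℓ →
        0 < ⟪q • vec ℓ x - δ (wle (vec ℓ x)), E ℓ i - E ℓ (i + 1)⟫) :=
  stmt_9_general ℓ hℓ q hq k lam hlam hsum eps heps wle hwle1 hwle δ hδ
end
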